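/- arXiv:2306.06197 — 12 statements merged into one kernel-verified Lean document; each statement's English description precedes it below -/
import Mathlib

section
/- In the normal game on the 1×n board with target string SOO = [S,O,O], for every n the game is a draw: each player can force at least a draw, so neither player can force a win. -/
/-- The two letters of the SOS game. -/
inductive Letter : Type
  | S : Letter
  | O : Letter
  deriving DecidableEq

open Letter

/-- The target string `t` occurs left-to-right as a consecutive block on the
linear board `b`. -/
def Achieves {n : ℕ} (t : List Letter) (b : Fin n → Option Letter) : Prop :=
  ∃ i : ℕ, ∀ j : ℕ, (hj : j < t.length) → ∃ h : i + j < n,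
    b ⟨i + j, h⟩ = some (t.get ⟨j, hj⟩)

/-- `Force Win m w b`: the player to move in position `b` (with `m` remaining moves,
i.e. `m` empty cells) can force a win when `w = true`, resp. can force at least a
draw when `w = false`, in the normal game whose winning boards are given by `Win`
(a player wins if the board satisfies `Win` immediately after their move). -/
def Force {α : Type} [DecidableEq α] (Win : (α → Option Letter) → Prop) :
    ℕ → Bool → (α → Option Letter) → Prop
  | 0, w, _ => w = false
  | m + 1, w, b => ∃ i : α, ∃ x : Letter, b i = none ∧
      (Win (Function.update b i (some x)) ∨
        ¬ Force Win m (!w) (Function.update b i (some x)))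

/-- The first player can force a win in the normal game with target `t`
on the (initially empty) 1×n board. -/
def FirstWins (t : List Letter) (n : ℕ) : Prop :=
  Force (Achieves t) n true (fun _ : Fin n => none)

/-- The second player can force a win in the normal game with target `t`
on the (initially empty) 1×n board: the first player (to move) cannot even
force a draw. -/
def SecondWins (t : List Letter) (n : ℕ) : Prop :=
  ¬ Force (Achieves t) n false (fun _ : Fin n => none)

/-- The normal game with target `t` on the 1×n board is a draw under optimal
play: the first player can force at least a draw, and the second player can
force at least a draw (i.e. the first player cannot force a win). -/
def IsDraw (t : List Letter) (n : ℕ) : Prop :=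
  Force (Achieves t) n false (fun _ : Fin n => none) ∧
    ¬ Force (Achieves t) n true (fun _ : Fin n => none)


/-!
From a position in which no move completes `SOO`, the player to move can reach another such
position by writing `S` in the rightmost empty cell. A block `SOO` completed after that cannot use
this `S` as one of its `O`s; it cannot start at it, since its two `O`s would lie on cells to the
right, which were already filled, so the `S` alone would have completed it; and it cannot avoid
it, since then the opponent's move alone would have completed it. So either player can always
hand over a position without a winning move and never loses, while a player who hands over a
position with a winning move loses at once; hence nobody can force a win.
-/

open Finset Function Letter

section Game

variable {α : Type} [Fintype α] [DecidableEq α]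

def emptyCells (b : α → Option Letter) : Finset α :=
  univ.filter (b · = none)

lemma emptyCells_update {b : α → Option Letter} {i : α} (hi : b i = none) (x : Letter) :
    emptyCells (update b i (some x)) = (emptyCells b).erase i := by
  ext j
  by_cases h : j = i <;> simp [emptyCells, update_apply, h, hi]

lemma card_emptyCells_update {b : α → Option Letter} {i : α} (hi : b i = none) (x : Letter) :
    #(emptyCells (update b i (some x))) + 1 = #(emptyCells b) := by
  rw [emptyCells_update hi, card_erase_add_one (by simp [emptyCells, hi])]

def NoWinningMove (Win : (α → Option Letter) → Prop) (b : α → Option Letter) : Prop :=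
  ∀ i x, b i = none → ¬ Win (update b i (some x))

omit [Fintype α] in
lemma force_of_winning_move {Win : (α → Option Letter) → Prop} {b : α → Option Letter}
    {i : α} {x : Letter} (hi : b i = none) (hwin : Win (update b i (some x))) (m : ℕ)
    (w : Bool) : Force Win (m + 1) w b :=
  ⟨i, x, hi, Or.inl hwin⟩

theorem force_draw_and_not_force_win_of_noWinningMove {Win : (α → Option Letter) → Prop}
    (hmove : ∀ b, NoWinningMove Win b → ∀ i, b i = none →
      ∃ j x, b j = none ∧ NoWinningMove Win (update b j (some x)))
    (m : ℕ) (b : α → Option Letter) (hm : #(emptyCells b) = m) (hb : NoWinningMove Win b) :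
    Force Win m false b ∧ ¬ Force Win m true b := by
  induction m generalizing b with
  | zero => exact ⟨rfl, Bool.noConfusion⟩
  | succ m ih =>
    have hcount {i x} (hi : b i = none) : #(emptyCells (update b i (some x))) = m := by
      have := card_emptyCells_update hi x
      omega
    constructor
    · obtain ⟨i, hi⟩ : (emptyCells b).Nonempty := card_pos.mp (by omega)
      obtain ⟨j, x, hj, hquiet⟩ := hmove b hb i (by simpa [emptyCells] using hi)
      exact ⟨j, x, hj, Or.inr (ih _ (hcount hj) hquiet).2⟩
    · rintro ⟨i, x, hi, hwin | hlose⟩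
      · exact hb i x hi hwin
      apply hlose
      by_cases hquiet : NoWinningMove Win (update b i (some x))
      · exact (ih _ (hcount hi) hquiet).1
      obtain ⟨j, y, hj, hwin⟩ : ∃ j y, update b i (some x) j = none ∧
          Win (update (update b i (some x)) j (some y)) := by
        simpa [NoWinningMove] using hquiet
      obtain ⟨m, rfl⟩ : ∃ m', m = m' + 1 := Nat.exists_eq_succ_of_ne_zero <| by
        rw [← hcount hi, ← pos_iff_ne_zero, card_pos]
        exact ⟨j, by simpa [emptyCells] using hj⟩
      exact force_of_winning_move hj hwin m false

end Game

section Strings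

variable {n : ℕ}

/-- `Achieves t b` unfolds to `∃ p, OccursAt t b p`. -/
def OccursAt (t : List Letter) (b : Fin n → Option Letter) (p : ℕ) : Prop :=
  ∀ j : ℕ, (hj : j < t.length) → ∃ h : p + j < n, b ⟨p + j, h⟩ = some (t.get ⟨j, hj⟩)

lemma OccursAt.apply {t : List Letter} {b : Fin n → Option Letter} {p : ℕ}
    (hp : OccursAt t b p) {k : Fin n} {j : ℕ} (hk : k.val = p + j) (hj : j < t.length) :
    b k = some (t.get ⟨j, hj⟩) := by
  obtain ⟨h, e⟩ := hp j hj
  rwa [show k = ⟨p + j, h⟩ from Fin.ext hk]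

lemma OccursAt.of_update {t : List Letter} {b : Fin n → Option Letter} {p : ℕ} {k : Fin n}
    {v : Option Letter} (hp : OccursAt t (update b k v) p)
    (hk : k.val < p ∨ p + t.length ≤ k.val) : OccursAt t b p := by
  intro j hj
  obtain ⟨h, e⟩ := hp j hj
  refine ⟨h, ?_⟩
  rwa [update_of_ne (by simp [Fin.ext_iff]; omega)] at e

lemma noWinningMove_empty {t : List Letter} (ht : 2 ≤ t.length) :
    NoWinningMove (Achieves t) (fun _ : Fin n => none) := by
  rintro i x - ⟨p, hp : OccursAt t _ p⟩
  obtain ⟨h0, e0⟩ := hp 0 (by omega)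
  obtain ⟨h1, e1⟩ := hp 1 (by omega)
  by_cases hi : p = i.val
  · rw [update_of_ne (by simp [Fin.ext_iff]; omega)] at e1
    cases e1
  · rw [update_of_ne (by simpa [Fin.ext_iff] using hi)] at e0
    cases e0

lemma noWinningMove_soo_update_rightmost {b : Fin n → Option Letter}
    (hb : NoWinningMove (Achieves [S, O, O]) b) {i : Fin n} (hi : b i = none)
    (hright : ∀ j, b j = none → j ≤ i) :
    NoWinningMove (Achieves [S, O, O]) (update b i (some S)) := by
  rintro j y hj ⟨p, hp : OccursAt _ _ p⟩
  have hji : j ≠ i := by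
    rintro rfl
    simp at hj
  have hbj : b j = none := by rwa [update_of_ne hji] at hj
  have hjlt : j.val < i.val := Fin.lt_def.mp (lt_of_le_of_ne (hright j hbj) hji)
  have hiS : update (update b i (some S)) j (some y) i = some S := by
    rw [update_of_ne hji.symm, update_self]
  rcases (by omega : (i.val < p ∨ p + 3 ≤ i.val) ∨ i.val = p ∨ i.val = p + 1 ∨ i.val = p + 2)
    with hout | hstart | hmid | hend
  · rw [update_comm hji.symm] at hp
    exact hb j y hbj ⟨p, hp.of_update hout⟩
  · exact hb i S hi ⟨p, hp.of_update (Or.inl (by omega))⟩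
  · simpa [hiS] using hp.apply hmid (by simp)
  · simpa [hiS] using hp.apply hend (by simp)

lemma exists_move_noWinningMove_soo (b : Fin n → Option Letter)
    (hb : NoWinningMove (Achieves [S, O, O]) b) (i : Fin n) (hi : b i = none) :
    ∃ j x, b j = none ∧ NoWinningMove (Achieves [S, O, O]) (update b j (some x)) := by
  have hne : (emptyCells b).Nonempty := ⟨i, by simpa [emptyCells] using hi⟩
  have hmax : b ((emptyCells b).max' hne) = none := by
    simpa [emptyCells] using max'_mem _ hne
  exact ⟨_, S, hmax, noWinningMove_soo_update_rightmost hb hmax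
    fun j hj => le_max' _ j (by simpa [emptyCells] using hj)⟩

end Strings

/-- The normal game on the 1×n board with target string SOO is a draw for
every `n`: each player can force at least a draw, so neither player can force
a win. -/
theorem soo_game_draw (n : ℕ) : IsDraw [S, O, O] n :=
  force_draw_and_not_force_win_of_noWinningMove exists_move_noWinningMove_soo n _
    (by simp [emptyCells]) (noWinningMove_empty (by simp))
end

section
/- Let t : List Letter be any target string that contains SSS = [S,S,S] as a consecutive substring. Then for every n, the normal game on the 1×n board with target t is a draw: each player has a strategy preventing the board from ever achieving t after the opponent's moves, so neither player can force a win. -/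
open Letter

section SSSAux

open Letter

variable {n : ℕ}

/-- No three consecutive S's on the board. -/
def NoSSS (b : Fin n → Option Letter) : Prop :=
  ∀ p : ℕ, (h : p + 2 < n) →
    ¬ (b ⟨p, by omega⟩ = some S ∧ b ⟨p+1, by omega⟩ = some S ∧ b ⟨p+2, h⟩ = some S)

/-- The domino invariant: in every domino (2k, 2k+1), an S forces its partner to be O. -/
def INV (b : Fin n → Option Letter) : Prop :=
  ∀ p : ℕ, (h : p + 1 < n) → p % 2 = 0 →
    (b ⟨p, by omega⟩ = some S → b ⟨p+1, h⟩ = some O) ∧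
    (b ⟨p+1, h⟩ = some S → b ⟨p, by omega⟩ = some O)

lemma inv_empty : INV (fun _ : Fin n => none) := by
  intro p h hp; simp

lemma noSSS_not_achieves {t : List Letter} (ht : [S,S,S] <:+: t)
    {b : Fin n → Option Letter} (hb : NoSSS b) : ¬ Achieves t b := by
  rintro ⟨i, hi⟩
  obtain ⟨s, u, rfl⟩ := ht
  have hlen : ∀ r, r < 3 → s.length + r < (s ++ [S,S,S] ++ u).length := by
    intro r hr; simp [List.length_append]; omega
  have key : ∀ r (hr : r < 3), ∃ h : i + s.length + r < n, b ⟨i + s.length + r, h⟩ = some S := by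
    intro r hr
    obtain ⟨h1, h2⟩ := hi (s.length + r) (hlen r hr)
    have e : i + s.length + r = i + (s.length + r) := by omega
    refine ⟨by omega, ?_⟩
    have efin : (⟨i + s.length + r, by omega⟩ : Fin n) = ⟨i + (s.length + r), h1⟩ := by
      simp [Fin.ext_iff, e]
    rw [efin, h2]
    congr 1
    have hr3 : s.length + r < (s ++ [S,S,S]).length := by simp; omega
    rw [List.get_eq_getElem, List.getElem_append_left hr3,
        List.getElem_append_right (by omega)]
    have h3S : ∀ (k : ℕ) (hk : k < 3), ([S,S,S] : List Letter)[k] = S := by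
      intro k hk; interval_cases k <;> rfl
    exact h3S _ (by omega)
  obtain ⟨ha2, hv2⟩ := key 2 (by omega)
  obtain ⟨ha0, hv0⟩ := key 0 (by omega)
  obtain ⟨ha1, hv1⟩ := key 1 (by omega)
  exact hb (i + s.length) ha2 ⟨hv0, hv1, hv2⟩

/-- Number of empty cells. -/
def E (b : Fin n → Option Letter) : ℕ := (Finset.univ.filter fun i => b i = none).card

lemma exists_empty {b : Fin n → Option Letter} (h : 1 ≤ E b) : ∃ i, b i = none := by
  obtain ⟨i, hi⟩ := Finset.card_pos.mp h
  exact ⟨i, (Finset.mem_filter.mp hi).2⟩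

lemma E_update {b : Fin n → Option Letter} {i : Fin n} (hi : b i = none) (x : Letter) :
    E (Function.update b i (some x)) + 1 = E b := by
  classical
  have hset : (Finset.univ.filter fun j => Function.update b i (some x) j = none)
      = (Finset.univ.filter fun j => b j = none).erase i := by
    ext j
    by_cases hj : j = i
    · subst hj; simp [Function.update_self]
    · simp [Function.update_of_ne hj, hj]
  have hmem : i ∈ (Finset.univ.filter fun j => b j = none) := by simp [hi]
  have hpos : 0 < (Finset.univ.filter fun j => b j = none).card :=
    Finset.card_pos.mpr ⟨i, hmem⟩
  rw [E, hset, Finset.card_erase_of_mem hmem]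
  rw [E]
  omega

lemma inv_set_O {b : Fin n → Option Letter} (hb : INV b) (j : Fin n) :
    INV (Function.update b j (some O)) := by
  intro p h hp
  have hb' := hb p h hp
  simp only [Function.update_apply]
  split_ifs with h1 h2 h2 <;> simp_all

lemma inv_update_noSSS {b : Fin n → Option Letter} (hb : INV b) {i : Fin n}
    (hi : b i = none) (v : Option Letter) :
    NoSSS (Function.update b i v) := by
  have pair : ∀ q : ℕ, (hq : q + 1 < n) → q % 2 = 0 →
      ¬ (Function.update b i v ⟨q, by omega⟩ = some S ∧
         Function.update b i v ⟨q+1, hq⟩ = some S) := by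
    rintro q hq hqe ⟨hS1, hS2⟩
    have hb' := hb q hq hqe
    simp only [Function.update_apply] at hS1 hS2
    split_ifs at hS1 hS2 with e1 e2 e2
    · have h12 := e1.trans e2.symm
      simp only [Fin.mk.injEq] at h12
      omega
    · rw [← e1] at hi
      have := hb'.2 hS2
      simp [hi] at this
    · rw [← e2] at hi
      have := hb'.1 hS1
      simp [hi] at this
    · have := hb'.1 hS1
      simp [this] at hS2
  rintro p h ⟨h1, h2, h3⟩
  rcases Nat.even_or_odd p with he | ho
  · exact pair p (by omega) (Nat.even_iff.mp he) ⟨h1, h2⟩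
  · have hp2 : p % 2 = 1 := Nat.odd_iff.mp ho
    exact pair (p+1) (by omega) (by omega) ⟨h2, h3⟩

lemma restore {b : Fin n → Option Letter} (hb : INV b) (i : Fin n) (x : Letter)
    (hi : b i = none)
    (hne : 1 ≤ E (Function.update b i (some x))) :
    ∃ j : Fin n, Function.update b i (some x) j = none ∧
      INV (Function.update (Function.update b i (some x)) j (some O)) := by
  have easy : INV (Function.update b i (some x)) →
      ∃ j : Fin n, Function.update b i (some x) j = none ∧
        INV (Function.update (Function.update b i (some x)) j (some O)) := by
    intro hb'
    obtain ⟨j, hj⟩ := exists_empty hne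
    exact ⟨j, hj, inv_set_O hb' j⟩
  cases x with
  | O => exact easy (inv_set_O hb i)
  | S =>
    rcases Nat.even_or_odd (i : ℕ) with he | ho
    · -- i is the left cell of its domino
      have he2 : (i : ℕ) % 2 = 0 := Nat.even_iff.mp he
      by_cases hlt : (i : ℕ) + 1 < n
      · have hbc := hb (i : ℕ) hlt he2
        have hii : (⟨(i : ℕ), by omega⟩ : Fin n) = i := by simp [Fin.ext_iff]
        rw [hii] at hbc
        cases hcv : b ⟨(i : ℕ) + 1, hlt⟩ with
        | none =>
          refine ⟨⟨(i : ℕ) + 1, hlt⟩, ?_, ?_⟩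
          · rw [Function.update_of_ne (by simp [Fin.ext_iff]), hcv]
          · intro p h hp
            have hbp := hb p h hp
            simp only [Function.update_apply, Fin.ext_iff, Fin.val_mk] at *
            split_ifs <;> first
              | exact hbp
              | omega
              | (constructor <;> intro hS <;> simp_all <;> omega)
        | some y =>
          cases y with
          | S =>
            have h2 := hbc.2 hcv
            rw [hi] at h2
            cases h2
          | O =>
            apply easy
            intro p h hp
            have hbp := hb p h hp
            simp only [Function.update_apply, Fin.ext_iff, Fin.val_mk] at *
            split_ifs <;> first
              | exact hbp
              | omega
              | (constructor <;> intro hS <;> simp_all <;> omega)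
      · -- i is an unpaired last cell
        apply easy
        intro p h hp
        have hbp := hb p h hp
        simp only [Function.update_apply, Fin.ext_iff, Fin.val_mk] at *
        split_ifs <;> first
          | exact hbp
          | omega
          | (constructor <;> intro hS <;> simp_all <;> omega)
    · -- i is the right cell of its domino
      have ho2 : (i : ℕ) % 2 = 1 := Nat.odd_iff.mp ho
      have hpos : 1 ≤ (i : ℕ) := by omega
      have hlt : ((i : ℕ) - 1) + 1 < n := by have := i.isLt; omega
      have hbc := hb ((i : ℕ) - 1) hlt (by omega)
      have hii : (⟨((i : ℕ) - 1) + 1, hlt⟩ : Fin n) = i := by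
        simp [Fin.ext_iff]; omega
      rw [hii] at hbc
      cases hcv : b ⟨(i : ℕ) - 1, by omega⟩ with
      | none =>
        refine ⟨⟨(i : ℕ) - 1, by omega⟩, ?_, ?_⟩
        · rw [Function.update_of_ne (by simp [Fin.ext_iff]; omega), hcv]
        · intro p h hp
          have hbp := hb p h hp
          simp only [Function.update_apply, Fin.ext_iff, Fin.val_mk] at *
          split_ifs <;> first
            | exact hbp
            | omega
            | (constructor <;> intro hS <;> simp_all <;> omega)
      | some y =>
        cases y with
        | S =>
          have h2 := hbc.1 hcv
          rw [hi] at h2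
          cases h2
        | O =>
          apply easy
          intro p h hp
          have hbp := hb p h hp
          by_cases hpi : p + 1 = (i : ℕ)
          · have e1 : ¬ ((⟨p, by omega⟩ : Fin n) = i) := by
              simp only [Fin.ext_iff, Fin.val_mk]; omega
            have e2 : (⟨p + 1, h⟩ : Fin n) = i := by
              simp only [Fin.ext_iff, Fin.val_mk]; omega
            have hbO : b ⟨p, by omega⟩ = some O := by
              have hpe : p = (i : ℕ) - 1 := by omega
              subst hpe
              exact hcv
            simp only [Function.update_apply, if_neg e1, if_pos e2, hbO]
            simp
          · have e1 : ¬ ((⟨p, by omega⟩ : Fin n) = i) := by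
              simp only [Fin.ext_iff, Fin.val_mk]; omega
            have e2 : ¬ ((⟨p + 1, h⟩ : Fin n) = i) := by
              simp only [Fin.ext_iff, Fin.val_mk]; omega
            simp only [Function.update_apply, if_neg e1, if_neg e2]
            exact hbp

lemma main_lemma (t : List Letter) (ht : [S,S,S] <:+: t) :
    ∀ m : ℕ, (∀ b : Fin n → Option Letter, INV b → m ≤ E b →
        ¬ Force (Achieves t) m true b) ∧
      (∀ (b : Fin n → Option Letter) (i : Fin n) (x : Letter), INV b → b i = none →
        m + 1 ≤ E b → Force (Achieves t) m false (Function.update b i (some x))) := by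
  intro m
  induction m with
  | zero =>
    constructor
    · intro b _ _ hF
      simp [Force] at hF
    · intro b i x _ _ _
      simp [Force]
  | succ m ih =>
    obtain ⟨ihP, ihQ⟩ := ih
    constructor
    · intro b hb hE hF
      simp only [Force, Bool.not_true] at hF
      obtain ⟨i, x, hi, hcase⟩ := hF
      have hb' : NoSSS (Function.update b i (some x)) := inv_update_noSSS hb hi _
      rcases hcase with hwin | hnf
      · exact noSSS_not_achieves ht hb' hwin
      · exact hnf (ihQ b i x hb hi hE)
    · intro b i x hb hi hE
      have hE' : 1 ≤ E (Function.update b i (some x)) := by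
        have := E_update hi x; omega
      obtain ⟨j, hj, hinv⟩ := restore hb i x hi hE'
      simp only [Force, Bool.not_false]
      refine ⟨j, O, hj, Or.inr ?_⟩
      apply ihP _ hinv
      have h1 := E_update hi x
      have h2 := E_update hj O
      omega

lemma E_none : E (fun _ : Fin n => none) = n := by
  simp [E]

end SSSAux

/-- Any normal game whose target string contains SSS as a consecutive
substring is a draw on the 1×n board, for every `n`: neither player can force
a win. -/
theorem sss_substring_draw (t : List Letter) (h : [S, S, S] <:+: t) (n : ℕ) :
    IsDraw t n := by
  have hM := fun m => main_lemma (n := n) t h m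
  constructor
  · cases n with
    | zero => simp [Force]
    | succ m =>
      simp only [Force, Bool.not_false]
      refine ⟨⟨0, Nat.succ_pos m⟩, Letter.O, by trivial, Or.inr ?_⟩
      apply (hM m).1 _ (inv_set_O inv_empty _)
      have h1 := E_update (b := fun _ : Fin (m+1) => none) (i := ⟨0, Nat.succ_pos m⟩) rfl Letter.O
      have h2 : E (fun _ : Fin (m+1) => none) = m + 1 := E_none
      omega
  · intro hF
    exact (hM n).1 _ inv_empty (by rw [E_none]) hF
end

section
/- Let t : List Letter be a target string whose first letter is S. If for every n the second player can force at least a draw in the normal game with target t on the 1×n board, then for every n the first player can also force at least a draw; hence the game with target t is a draw on the 1×n board for every n. -/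
open Letter

/-- Extend a board of size `n` to size `n+1` by putting `x` in the new last cell. -/
def Board.ext {n : ℕ} (b : Fin n → Option Letter) (x : Letter) : Fin (n + 1) → Option Letter :=
  fun i => if h : (i : ℕ) < n then b ⟨i, h⟩ else some x

lemma achieves_ext {n : ℕ} {t : List Letter} (ht : t ≠ []) {x : Letter}
    (hx : x ≠ t.getLast ht) (b : Fin n → Option Letter) :
    Achieves t (Board.ext b x) ↔ Achieves t b := by
  have hlen : 0 < t.length := List.length_pos_iff.mpr ht
  constructor
  · rintro ⟨i, hi⟩
    refine ⟨i, fun j hj => ?_⟩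
    obtain ⟨hlast, hval⟩ := hi (t.length - 1) (by omega)
    have hin : i + (t.length - 1) < n := by
      by_contra h
      have heq : i + (t.length - 1) = n := by omega
      have h1 : Board.ext b x ⟨i + (t.length - 1), hlast⟩ = some x := by
        simp [Board.ext, heq]
      rw [h1] at hval
      have h2 : t.get ⟨t.length - 1, by omega⟩ = t.getLast ht := by
        rw [List.getLast_eq_getElem]
        simp
      rw [h2] at hval
      exact hx (Option.some_injective _ hval)
    obtain ⟨h2, hval2⟩ := hi j hj
    have hjn : i + j < n := by omega
    refine ⟨hjn, ?_⟩
    have h3 : Board.ext b x ⟨i + j, h2⟩ = b ⟨i + j, hjn⟩ := by simp [Board.ext, hjn]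
    rw [← h3]; exact hval2
  · rintro ⟨i, hi⟩
    refine ⟨i, fun j hj => ?_⟩
    obtain ⟨h, hval⟩ := hi j hj
    refine ⟨by omega, ?_⟩
    simpa [Board.ext, h] using hval

lemma ext_update {n : ℕ} (b : Fin n → Option Letter) (x : Letter) (i : Fin n)
    (v : Option Letter) :
    Function.update (Board.ext b x) i.castSucc v = Board.ext (Function.update b i v) x := by
  funext j
  rcases eq_or_ne j i.castSucc with rfl | hne
  · simp [Board.ext, Function.update, i.isLt]
  · have hval : (j : ℕ) = (i : ℕ) → False := by
      intro h
      exact hne (Fin.ext (by simp [h]))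
    by_cases hj : (j : ℕ) < n
    · have : (⟨(j : ℕ), hj⟩ : Fin n) ≠ i := fun h => hval (by simpa using congrArg Fin.val h)
      simp [Board.ext, Function.update_of_ne hne, hj, Function.update_of_ne this]
    · simp [Board.ext, Function.update_of_ne hne, hj]

lemma force_ext {n : ℕ} {t : List Letter} (ht : t ≠ []) {x : Letter}
    (hx : x ≠ t.getLast ht) :
    ∀ (m : ℕ) (w : Bool) (b : Fin n → Option Letter),
      Force (Achieves t) m w (Board.ext b x) ↔ Force (Achieves t) m w b := by
  intro m
  induction m with
  | zero => intro w b; exact Iff.rfl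
  | succ m ih =>
    intro w b
    constructor
    · rintro ⟨i, y, hempty, h⟩
      have hi : (i : ℕ) < n := by
        by_contra hin
        simp [Board.ext, hin] at hempty
      have hcast : i = (⟨(i : ℕ), hi⟩ : Fin n).castSucc := Fin.ext rfl
      rw [hcast, ext_update] at h
      refine ⟨⟨(i : ℕ), hi⟩, y, by simpa [Board.ext, hi] using hempty, ?_⟩
      rcases h with h | h
      · exact Or.inl ((achieves_ext ht hx _).mp h)
      · exact Or.inr (fun hc => h ((ih _ _).mpr hc))
    · rintro ⟨i, y, hempty, h⟩
      refine ⟨i.castSucc, y, by simpa [Board.ext, i.isLt] using hempty, ?_⟩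
      rw [ext_update]
      rcases h with h | h
      · exact Or.inl ((achieves_ext ht hx _).mpr h)
      · exact Or.inr (fun hc => h ((ih _ _).mp hc))

/-- If the target string `t` starts with the letter S and for every `n` the
second player can force at least a draw (i.e. the first player cannot force
a win), then for every `n` the first player can also force at least a draw;
hence the game with target `t` is a draw on the 1×n board for every `n`. -/
theorem second_player_draw_suffices (t : List Letter)
    (hS : t.head? = some S)
    (hsecond : ∀ n : ℕ, ¬ Force (Achieves t) n true (fun _ : Fin n => none)) :
    (∀ n : ℕ, Force (Achieves t) n false (fun _ : Fin n => none)) ∧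
      ∀ n : ℕ, IsDraw t n := by
  have ht : t ≠ [] := by intro h; rw [h] at hS; simp at hS
  obtain ⟨x, hx⟩ : ∃ x : Letter, x ≠ t.getLast ht := by
    cases h : t.getLast ht
    · exact ⟨O, by simp [h]⟩
    · exact ⟨S, by simp [h]⟩
  have key : ∀ n : ℕ, Force (Achieves t) n false (fun _ : Fin n => none) := by
    intro n
    have h2 : ¬ ∃ i : Fin (n + 1), ∃ y : Letter,
        (fun _ : Fin (n+1) => (none : Option Letter)) i = none ∧
        (Achieves t (Function.update (fun _ : Fin (n+1) => (none : Option Letter)) i (some y)) ∨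
          ¬ Force (Achieves t) n (!true)
            (Function.update (fun _ : Fin (n+1) => (none : Option Letter)) i (some y))) :=
      hsecond (n + 1)
    push_neg at h2
    obtain ⟨-, h3⟩ := h2 ⟨n, Nat.lt_succ_self n⟩ x rfl
    have hbd : Function.update (fun _ : Fin (n+1) => (none : Option Letter))
        ⟨n, Nat.lt_succ_self n⟩ (some x) = Board.ext (fun _ : Fin n => none) x := by
      funext j
      rcases eq_or_ne j ⟨n, Nat.lt_succ_self n⟩ with rfl | hne
      · simp [Board.ext]
      · have hj : (j : ℕ) < n := by
          have h1 := j.isLt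
          have h2 : (j : ℕ) ≠ n := fun h => hne (Fin.ext h)
          omega
        simp [Board.ext, Function.update_of_ne hne, hj]
    rw [hbd] at h3
    exact (force_ext ht hx n false _).mp h3
  exact ⟨key, fun n => ⟨key n, hsecond n⟩⟩
end

section
/- In the two-target normal game on the 1×n board where a player wins by achieving either SSSS = [S,S,S,S] or OOOO = [O,O,O,O], for every n the game is a draw: neither player can force a win. -/
open Letter

/-- A board wins the two-target game if it achieves SSSS or achieves OOOO. -/
def WinSSSSOOOO {n : ℕ} (b : Fin n → Option Letter) : Prop :=
  Achieves [S, S, S, S] b ∨ Achieves [O, O, O, O] b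


open Function Finset

namespace Letter

def flip : Letter → Letter
  | S => O
  | O => S

@[simp] lemma flip_flip (x : Letter) : x.flip.flip = x := by cases x <;> rfl

lemma flip_ne (x : Letter) : x.flip ≠ x := by cases x <;> decide

end Letter

section Strategy

variable {α : Type} [DecidableEq α]

def CanMoveInto (G : (α → Option Letter) → Prop) (b : α → Option Letter) : Prop :=
  (∃ i, b i = none) → ∃ i x, b i = none ∧ G (update b i (some x))

variable [Fintype α]

lemma card_filter_update_eq_none {b : α → Option Letter} {i : α} (hi : b i = none)
    (x : Letter) :
    #{j | update b i (some x) j = none} = #{j | b j = none} - 1 := by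
  have : ({j | update b i (some x) j = none} : Finset α) =
      ({j | b j = none} : Finset α).erase i := by
    ext j
    by_cases hj : j = i <;> simp [hj]
  rw [this, card_erase_of_mem (by simpa using hi)]

theorem force_draw_of_invariant {Win : (α → Option Letter) → Prop}
    (G : (α → Option Letter) → Prop)
    (no_win : ∀ b, G b → ∀ i x, b i = none → ¬ Win (update b i (some x)))
    (move : ∀ b, G b → CanMoveInto G b)
    (reply : ∀ b, G b → ∀ i x, b i = none → CanMoveInto G (update b i (some x)))
    {b : α → Option Letter} (hb : G b) :
    Force Win #{i | b i = none} false b ∧ ¬ Force Win #{i | b i = none} true b := by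
  suffices key : ∀ m (b : α → Option Letter), #{i | b i = none} = m →
      (CanMoveInto G b → Force Win m false b) ∧ (G b → ¬ Force Win m true b) from
    ⟨(key _ b rfl).1 (move b hb), (key _ b rfl).2 hb⟩
  intro m
  induction m with
  | zero => intro b _; simp [Force]
  | succ m ih =>
    intro b hcard
    have hcard' : ∀ {i} x, b i = none → #{j | update b i (some x) j = none} = m :=
      fun x hi => by
      rw [card_filter_update_eq_none hi, hcard, Nat.add_sub_cancel]
    constructor
    · intro hmv
      obtain ⟨i, hi⟩ := card_pos.1 (hcard ▸ m.succ_pos : 0 < #{i | b i = none})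
      obtain ⟨i, x, hi, hG⟩ := hmv ⟨i, (mem_filter.1 hi).2⟩
      exact ⟨i, x, hi, Or.inr ((ih _ (hcard' x hi)).2 hG)⟩
    · rintro hG ⟨i, x, hi, hwin | hforce⟩
      · exact no_win b hG i x hi hwin
      · exact hforce ((ih _ (hcard' x hi)).1 (reply b hG i x hi))

end Strategy

section Board

variable {n : ℕ}

/-- Cells beyond the end of the board read as `none`. -/
def cellAt (b : Fin n → Option Letter) (i : ℕ) : Option Letter :=
  if h : i < n then b ⟨i, h⟩ else none

lemma cellAt_val (b : Fin n → Option Letter) (c : Fin n) : cellAt b c = b c := by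
  simp [cellAt]

lemma cellAt_update (b : Fin n → Option Letter) (c : Fin n) (v : Option Letter) (i : ℕ) :
    cellAt (update b c v) i = if i = c then v else cellAt b i := by
  unfold cellAt
  split_ifs with h₁ h₂ h₂ <;> simp_all [Fin.ext_iff]

lemma cellAt_update_of_ne (b : Fin n → Option Letter) {c : Fin n} (v : Option Letter) {i : ℕ}
    (hi : i ≠ c) : cellAt (update b c v) i = cellAt b i := by
  rw [cellAt_update, if_neg hi]

lemma cellAt_update_of_eq_some {b : Fin n → Option Letter} {c : Fin n} (hc : b c = none)
    (v : Option Letter) {i : ℕ} {x : Letter} (hi : cellAt b i = some x) :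
    cellAt (update b c v) i = some x := by
  rwa [cellAt_update_of_ne]
  rintro rfl
  simp [cellAt_val, hc] at hi

lemma exists_window_of_achieves {b : Fin n → Option Letter} {x : Letter}
    (h : Achieves [x, x, x, x] b) :
    ∃ w, w + 3 < n ∧ ∀ j ≤ 3, cellAt b (w + j) = some x := by
  obtain ⟨w, hw⟩ := h
  refine ⟨w, (hw 3 (by simp)).1, fun j hj => ?_⟩
  obtain ⟨hlt, hcell⟩ := hw j (by simp only [List.length_cons, List.length_nil]; omega)
  rw [cellAt, dif_pos hlt, hcell]
  interval_cases j <;> rfl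

def Blocked (b : Fin n → Option Letter) (w : ℕ) : Prop :=
  ∃ c d x, w ≤ c ∧ c ≤ w + 3 ∧ w ≤ d ∧ d ≤ w + 3 ∧
    cellAt b c = some x ∧ cellAt b d = some x.flip

lemma Blocked.mono {b b' : Fin n → Option Letter}
    (hext : ∀ i x, cellAt b i = some x → cellAt b' i = some x) {w : ℕ} :
    Blocked b w → Blocked b' w := by
  rintro ⟨c, d, x, h₁, h₂, h₃, h₄, hc, hd⟩
  exact ⟨c, d, x, h₁, h₂, h₃, h₄, hext c x hc, hext d _ hd⟩

def PairEmpty (b : Fin n → Option Letter) (k : ℕ) : Prop :=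
  cellAt b (2 * k) = none ∧ cellAt b (2 * k + 1) = none

def PairOpposite (b : Fin n → Option Letter) (k : ℕ) : Prop :=
  ∃ x, cellAt b (2 * k) = some x ∧ cellAt b (2 * k + 1) = some x.flip

lemma PairEmpty.cellAt_eq_none {b : Fin n → Option Letter} {k i : ℕ} (h : PairEmpty b k)
    (hi : i / 2 = k) : cellAt b i = none := by
  obtain rfl | rfl : i = 2 * k ∨ i = 2 * k + 1 := by omega
  exacts [h.1, h.2]

lemma PairOpposite.blocked {b : Fin n → Option Letter} {k w : ℕ} (h : PairOpposite b k)
    (hw : w ≤ 2 * k) (hw' : 2 * k ≤ w + 2) : Blocked b w :=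
  let ⟨x, hx, hx'⟩ := h
  ⟨2 * k, 2 * k + 1, x, hw, by omega, by omega, by omega, hx, hx'⟩

/-- Pair `k` consists of the cells `2k, 2k+1`; the pairs below `m` are those given up so far. -/
structure PairingInvariant (m : ℕ) (b : Fin n → Option Letter) : Prop where
  intact : ∀ k, m ≤ k → 2 * k + 1 < n → PairEmpty b k ∨ PairOpposite b k
  covered : ∀ w, w + 3 < n →
    Blocked b w ∨ ∃ k, m ≤ k ∧ w ≤ 2 * k ∧ 2 * k ≤ w + 2 ∧ PairEmpty b k

lemma pairingInvariant_empty : PairingInvariant 0 (fun _ : Fin n => none) where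
  intact k _ _ := Or.inl ⟨by simp [cellAt], by simp [cellAt]⟩
  covered w _ := Or.inr ⟨(w + 1) / 2, Nat.zero_le _, by omega, by omega, by simp [cellAt],
    by simp [cellAt]⟩

namespace PairingInvariant

variable {m : ℕ} {b : Fin n → Option Letter}

theorem not_win (h : PairingInvariant m b) {t : Fin n} (ht : b t = none) (y : Letter) :
    ¬ WinSSSSOOOO (update b t (some y)) := by
  intro hwin
  obtain ⟨x, w, hw, hmono⟩ :
      ∃ x w, w + 3 < n ∧ ∀ j ≤ 3, cellAt (update b t (some y)) (w + j) = some x := by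
    rcases hwin with hwin | hwin <;> exact ⟨_, exists_window_of_achieves hwin⟩
  have hcell : ∀ c, w ≤ c → c ≤ w + 3 → cellAt (update b t (some y)) c = some x :=
    fun c h₁ h₂ => by simpa [Nat.add_sub_cancel' h₁] using hmono (c - w) (by omega)
  rcases h.covered w hw with
    ⟨c, d, z, h₁, h₂, h₃, h₄, hc, hd⟩ | ⟨k, -, h₁, h₂, he, he'⟩
  · have hzx := hcell c h₁ h₂
    have hzx' := hcell d h₃ h₄
    rw [cellAt_update_of_eq_some ht _ hc] at hzx
    rw [cellAt_update_of_eq_some ht _ hd] at hzx'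
    exact Letter.flip_ne z (Option.some.inj (hzx'.trans hzx.symm))
  · by_cases hk : 2 * k = t
    · have := hcell (2 * k + 1) (by omega) (by omega)
      rw [cellAt_update_of_ne _ _ (by omega), he'] at this
      cases this
    · have := hcell (2 * k) (by omega) (by omega)
      rw [cellAt_update_of_ne _ _ hk, he] at this
      cases this

theorem pairEmpty_of_cellAt_eq_none (h : PairingInvariant m b) {k i : ℕ} (hk : m ≤ k)
    (hkn : 2 * k + 1 < n) (hik : i / 2 = k) (hi : cellAt b i = none) : PairEmpty b k := by
  refine (h.intact k hk hkn).resolve_right fun ⟨x, hx, hx'⟩ => ?_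
  obtain rfl | rfl : i = 2 * k ∨ i = 2 * k + 1 := by omega
  · simp [hx] at hi
  · simp [hx'] at hi

theorem of_extends (h : PairingInvariant m b) {b' : Fin n → Option Letter}
    (hext : ∀ i x, cellAt b i = some x → cellAt b' i = some x)
    (hpair : ∀ k, m ≤ k → 2 * k + 1 < n →
      (cellAt b' (2 * k) = cellAt b (2 * k) ∧ cellAt b' (2 * k + 1) = cellAt b (2 * k + 1)) ∨
        PairOpposite b' k) :
    PairingInvariant m b' where
  intact k hk hkn := by
    rcases hpair k hk hkn with ⟨h₁, h₂⟩ | hopp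
    · simpa only [PairEmpty, PairOpposite, h₁, h₂] using h.intact k hk hkn
    · exact Or.inr hopp
  covered w hw := by
    rcases h.covered w hw with hbl | ⟨k, hk, h₁, h₂, he⟩
    · exact Or.inl (hbl.mono hext)
    · rcases hpair k hk (by omega) with ⟨e₁, e₂⟩ | hopp
      · exact Or.inr ⟨k, hk, h₁, h₂, e₁.trans he.1, e₂.trans he.2⟩
      · exact Or.inl (hopp.blocked h₁ h₂)

theorem update_of_unpaired (h : PairingInvariant m b) {c : Fin n} (hc : b c = none)
    (hout : ¬ (m ≤ c / 2 ∧ 2 * (c / 2) + 1 < n)) (x : Letter) :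
    PairingInvariant m (update b c (some x)) :=
  h.of_extends (fun _ _ => cellAt_update_of_eq_some hc _) fun _ _ _ =>
    Or.inl ⟨cellAt_update_of_ne _ _ (by omega), cellAt_update_of_ne _ _ (by omega)⟩

theorem update_pair (h : PairingInvariant m b) {t t' : Fin n}
    (he : PairEmpty b (t / 2)) (ht' : t'.1 / 2 = t / 2) (htt' : t.1 ≠ t') (y : Letter) :
    PairingInvariant m (update (update b t (some y)) t' (some y.flip)) := by
  have hcell : ∀ i, cellAt (update (update b t (some y)) t' (some y.flip)) i =
      if i = t' then some y.flip else if i = t then some y else cellAt b i := fun i => by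
    rw [cellAt_update, cellAt_update]
  refine h.of_extends (fun i x hi => ?_) fun k _ _ => ?_
  · have : i ≠ t := by rintro rfl; rw [he.cellAt_eq_none rfl] at hi; cases hi
    have : i ≠ t' := by rintro rfl; rw [he.cellAt_eq_none ht'] at hi; cases hi
    rwa [hcell, if_neg ‹i ≠ t'›, if_neg ‹i ≠ t›]
  by_cases hkt : k = t / 2
  · right
    by_cases hpar : t.1 % 2 = 0
    · exact ⟨y, by rw [hcell, if_neg (by omega), if_pos (by omega)],
        by rw [hcell, if_pos (by omega)]⟩
    · refine ⟨y.flip, by rw [hcell, if_pos (by omega)], ?_⟩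
      rw [hcell, if_neg (by omega), if_pos (by omega), Letter.flip_flip]
  · left
    exact ⟨by rw [hcell, if_neg (by omega), if_neg (by omega)],
      by rw [hcell, if_neg (by omega), if_neg (by omega)]⟩

theorem update_break (h : PairingInvariant m b) {k : ℕ} (hk : m ≤ k) (hkn : 2 * k + 1 < n)
    (he : PairEmpty b k) (hmin : ∀ k', m ≤ k' → k' < k → ¬ PairEmpty b k') {x : Letter}
    (hx : 0 < k → cellAt b (2 * k - 1) = some x.flip) :
    PairingInvariant (k + 1) (update b ⟨2 * k + 1, hkn⟩ (some x)) := by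
  set b' := update b ⟨2 * k + 1, hkn⟩ (some x)
  have hsame : ∀ k', k < k' →
      cellAt b' (2 * k') = cellAt b (2 * k') ∧ cellAt b' (2 * k' + 1) = cellAt b (2 * k' + 1) :=
    fun k' hk' => ⟨cellAt_update_of_ne _ _ (by simp only; omega),
      cellAt_update_of_ne _ _ (by simp only; omega)⟩
  have hext : ∀ i y, cellAt b i = some y → cellAt b' i = some y :=
    fun _ _ => cellAt_update_of_eq_some ((cellAt_val b _).symm.trans he.2) _
  refine ⟨fun k' hk' hk'n => ?_, fun w hw => ?_⟩
  · simpa only [PairEmpty, PairOpposite, hsame k' hk'] using h.intact k' (by omega) hk'n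
  rcases h.covered w hw with hbl | ⟨k', hk', h₁, h₂, he'⟩
  · exact Or.inl (hbl.mono hext)
  rcases lt_trichotomy k' k with hlt | rfl | hgt
  · exact absurd he' (hmin k' hk' hlt)
  · by_cases hwk : w < 2 * k'
    · left
      refine ⟨2 * k' + 1, 2 * k' - 1, x, by omega, by omega, by omega, by omega, ?_,
        hext _ _ (hx (by omega))⟩
      rw [cellAt_update, if_pos rfl]
    · have hnext := h.intact (k' + 1) (by omega) (by omega)
      simp only [PairEmpty, PairOpposite, ← (hsame (k' + 1) (by omega)).1,
        ← (hsame (k' + 1) (by omega)).2] at hnext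
      rcases hnext with hnext | hnext
      · exact Or.inr ⟨k' + 1, le_rfl, by omega, by omega, hnext⟩
      · exact Or.inl (PairOpposite.blocked hnext (by omega) (by omega))
  · exact Or.inr ⟨k', hgt, h₁, h₂, by simpa only [PairEmpty, hsame k' hgt] using he'⟩

theorem exists_move (h : PairingInvariant m b) :
    CanMoveInto (fun b' => ∃ m', PairingInvariant m' b') b := by
  rintro ⟨c, hc⟩
  by_cases hfree : ∃ c, b c = none ∧ ¬ (m ≤ c / 2 ∧ 2 * (c / 2) + 1 < n)
  · obtain ⟨c, hc, hout⟩ := hfree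
    exact ⟨c, S, hc, m, h.update_of_unpaired hc hout S⟩
  have hpaired : ∀ c : Fin n, b c = none → m ≤ c / 2 ∧ 2 * (c / 2) + 1 < n :=
    fun c hc => not_not.1 fun hout => hfree ⟨c, hc, hout⟩
  have hempty : ∃ k, m ≤ k ∧ 2 * k + 1 < n ∧ PairEmpty b k :=
    ⟨c / 2, (hpaired c hc).1, (hpaired c hc).2, h.pairEmpty_of_cellAt_eq_none (hpaired c hc).1
      (hpaired c hc).2 rfl (by rwa [cellAt_val])⟩
  classical
  obtain ⟨hk, hkn, he⟩ := Nat.find_spec hempty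
  set k := Nat.find hempty
  have hmin : ∀ k', m ≤ k' → k' < k → ¬ PairEmpty b k' :=
    fun k' hk' hlt he' => Nat.find_min hempty hlt ⟨hk', by omega, he'⟩
  -- An empty cell `2k-1` would be paired, making pair `k-1` empty against minimality.
  obtain ⟨x, hx⟩ : ∃ x : Letter, 0 < k → cellAt b (2 * k - 1) = some x.flip := by
    cases hz : cellAt b (2 * k - 1) with
    | some z => exact ⟨z.flip, fun _ => by rw [Letter.flip_flip]⟩
    | none =>
      refine ⟨S, fun hk0 => ?_⟩
      have hc' : m ≤ (2 * k - 1) / 2 ∧ 2 * ((2 * k - 1) / 2) + 1 < n :=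
        hpaired ⟨2 * k - 1, by omega⟩ ((cellAt_val b _).symm.trans hz)
      exact absurd (h.pairEmpty_of_cellAt_eq_none (by omega) (by omega) (by omega) hz)
        (hmin (k - 1) (by omega) (by omega))
  exact ⟨⟨2 * k + 1, hkn⟩, x, (cellAt_val b _).symm.trans he.2, k + 1,
    h.update_break hk hkn he hmin hx⟩

theorem exists_reply (h : PairingInvariant m b) {t : Fin n} (ht : b t = none) (y : Letter) :
    CanMoveInto (fun b' => ∃ m', PairingInvariant m' b') (update b t (some y)) := by
  by_cases hpaired : m ≤ t / 2 ∧ 2 * (t / 2) + 1 < n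
  · have he := h.pairEmpty_of_cellAt_eq_none hpaired.1 hpaired.2 rfl (by rwa [cellAt_val])
    let t' : Fin n := ⟨2 * (t / 2) + 1 - t % 2, by omega⟩
    have ht' : t'.1 / 2 = t / 2 := by simp only [t']; omega
    have htt' : t.1 ≠ t' := by simp only [t']; omega
    refine fun _ => ⟨t', y.flip, ?_, m, h.update_pair he ht' htt' y⟩
    rw [update_of_ne (Fin.ne_of_val_ne htt'.symm)]
    exact (cellAt_val b t').symm.trans (he.cellAt_eq_none ht')
  · exact (h.update_of_unpaired ht hpaired y).exists_move

end PairingInvariant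

end Board

/-- The two-target normal game on the 1×n board, where a player wins by
achieving SSSS or OOOO, is a draw for every `n`: the first player can force at
least a draw and the first player cannot force a win (so the second player can
force at least a draw as well); neither player can force a win. -/
theorem ssss_oooo_game_draw (n : ℕ) :
    Force WinSSSSOOOO n false (fun _ : Fin n => none) ∧
      ¬ Force WinSSSSOOOO n true (fun _ : Fin n => none) := by
  have h := force_draw_of_invariant (fun b : Fin n → Option Letter => ∃ m, PairingInvariant m b)
    (fun _ ⟨_, h⟩ _ _ hi => h.not_win hi _) (fun _ ⟨_, h⟩ => h.exists_move)
    (fun _ ⟨_, h⟩ _ _ hi => h.exists_reply hi _) ⟨0, pairingInvariant_empty⟩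
  simpa using h
end

section
/- For every n ≥ 3, the misère game on the 1×n board with target string SOS = [S,O,S] is a draw: each player has a strategy guaranteeing that they themselves never make the board achieve SOS. -/
open Letter

/-- `MisereSafe Win m w b`: in the misère game (where the player who first
produces a board satisfying `Win` loses), with `m` empty cells remaining in
position `b`, the tracked player can guarantee that they themselves never make
the board satisfy `Win`.  Here `w = true` means it is the tracked player's
turn, and `w = false` means it is the opponent's turn; if the opponent's move
makes the board satisfy `Win` the game ends (the opponent has lost). -/
def MisereSafe {α : Type} [DecidableEq α] (Win : (α → Option Letter) → Prop) :
    ℕ → Bool → (α → Option Letter) → Prop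
  | 0, _, _ => True
  | m + 1, true, b => ∃ i : α, ∃ x : Letter, b i = none ∧
      ¬ Win (Function.update b i (some x)) ∧
      MisereSafe Win m false (Function.update b i (some x))
  | m + 1, false, b => ∀ i : α, ∀ x : Letter, b i = none →
      (Win (Function.update b i (some x)) ∨
        MisereSafe Win m true (Function.update b i (some x)))

/-- The misère game with target `t` on the (initially empty) 1×n board is a
draw under optimal play: each of the two players has a strategy guaranteeing
that they themselves never make the board achieve `t`. -/
def MisereDraw (t : List Letter) (n : ℕ) : Prop :=
  MisereSafe (Achieves t) n true (fun _ : Fin n => none) ∧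
    MisereSafe (Achieves t) n false (fun _ : Fin n => none)

lemma achieves_iff {n : ℕ} (b : Fin n → Option Letter) :
    Achieves [S,O,S] b ↔ ∃ k, ∃ h : k + 2 < n,
      b ⟨k, by omega⟩ = some S ∧ b ⟨k+1, by omega⟩ = some O ∧ b ⟨k+2, h⟩ = some S := by
  constructor
  · rintro ⟨k, hk⟩
    obtain ⟨h0, e0⟩ := hk 0 (by norm_num)
    obtain ⟨h1, e1⟩ := hk 1 (by norm_num)
    obtain ⟨h2, e2⟩ := hk 2 (by norm_num)
    exact ⟨k, h2, e0, e1, e2⟩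
  · rintro ⟨k, h, e0, e1, e2⟩
    refine ⟨k, ?_⟩
    intro j hj
    have hj3 : j < 3 := hj
    interval_cases j
    · exact ⟨by omega, e0⟩
    · exact ⟨by omega, e1⟩
    · exact ⟨by omega, e2⟩

lemma upd_ne {n : ℕ} (b : Fin n → Option Letter) (i : Fin n) (v : Option Letter)
    {j : ℕ} (hj : j < n) (hne : j ≠ (i : ℕ)) :
    Function.update b i v ⟨j, hj⟩ = b ⟨j, hj⟩ := by
  apply Function.update_of_ne
  simp only [ne_eq, Fin.ext_iff]
  exact hne

lemma upd_self {n : ℕ} (b : Fin n → Option Letter) (i : Fin n) (v : Option Letter)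
    {j : ℕ} (hj : j < n) (he : j = (i : ℕ)) :
    Function.update b i v ⟨j, hj⟩ = v := by
  rw [show (⟨j, hj⟩ : Fin n) = i from Fin.ext he, Function.update_self]

lemma bcast {n : ℕ} (b : Fin n → Option Letter) {j₁ j₂ : ℕ} (h₁ : j₁ < n) (h₂ : j₂ < n)
    (e : j₁ = j₂) : b ⟨j₁, h₁⟩ = b ⟨j₂, h₂⟩ := by subst e; rfl

lemma update_achieves {n : ℕ} {b : Fin n → Option Letter} (hb : ¬ Achieves [S,O,S] b)
    {i : Fin n} {x : Letter}
    {k : ℕ} (hk : k + 2 < n)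
    (e0 : Function.update b i (some x) ⟨k, by omega⟩ = some S)
    (e1 : Function.update b i (some x) ⟨k+1, by omega⟩ = some O)
    (e2 : Function.update b i (some x) ⟨k+2, hk⟩ = some S) :
    (i : ℕ) = k ∨ (i : ℕ) = k + 1 ∨ (i : ℕ) = k + 2 := by
  by_contra h
  push_neg at h
  obtain ⟨h0, h1, h2⟩ := h
  apply hb
  rw [achieves_iff]
  exact ⟨k, hk, by rw [← upd_ne b i (some x) (by omega) (fun e => h0 e.symm)]; exact e0,
    by rw [← upd_ne b i (some x) (by omega) (fun e => h1 e.symm)]; exact e1,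
    by rw [← upd_ne b i (some x) hk (fun e => h2 e.symm)]; exact e2⟩

lemma exists_safe {n : ℕ} (b : Fin n → Option Letter) (hb : ¬ Achieves [S,O,S] b)
    (i : Fin n) (hi : b i = none) :
    ∃ x, ¬ Achieves [S,O,S] (Function.update b i (some x)) := by
  by_contra h
  push_neg at h
  obtain ⟨k, hk, a0, a1, a2⟩ := (achieves_iff _).1 (h O)
  obtain ⟨l, hl, c0, c1, c2⟩ := (achieves_iff _).1 (h S)
  -- locate i in the O-occurrence: it must be the middle cell
  have hik : (i : ℕ) = k + 1 := by
    rcases update_achieves hb hk a0 a1 a2 with h' | h' | h'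
    · rw [upd_self b i (some O) (by omega) h'.symm] at a0; exact absurd a0 (by simp)
    · exact h'
    · rw [upd_self b i (some O) hk h'.symm] at a2; exact absurd a2 (by simp)
  -- hence b has S at k and k+2
  have bk : b ⟨k, by omega⟩ = some S := by
    rw [← upd_ne b i (some O) (by omega) (by omega)]; exact a0
  have bk2 : b ⟨k+2, hk⟩ = some S := by
    rw [← upd_ne b i (some O) hk (by omega)]; exact a2
  -- locate i in the S-occurrence: it must be an end cell
  have hil : (i : ℕ) = l ∨ (i : ℕ) = l + 2 := by
    rcases update_achieves hb hl c0 c1 c2 with h' | h' | h'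
    · exact Or.inl h'
    · rw [upd_self b i (some S) (by omega) h'.symm] at c1; exact absurd c1 (by simp)
    · exact Or.inr h'
  have bl1 : b ⟨l+1, by omega⟩ = some O := by
    rw [← upd_ne b i (some S) (by omega) (by omega)]; exact c1
  rcases hil with h' | h'
  · -- i = l, so l + 1 = k + 2, but b at l+1 is O while b at k+2 is S
    rw [bcast b (by omega) hk (by omega : l + 1 = k + 2), bk2] at bl1
    exact absurd bl1 (by simp)
  · -- i = l + 2, so l + 1 = k, but b at l+1 is O while b at k is S
    rw [bcast b (by omega) (by omega : k < n) (by omega : l + 1 = k), bk] at bl1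
    exact absurd bl1 (by simp)

lemma card_empties_update {n : ℕ} (b : Fin n → Option Letter) (i : Fin n)
    (hi : b i = none) (x : Letter) :
    (Finset.univ.filter (fun j => Function.update b i (some x) j = none)).card + 1
      = (Finset.univ.filter (fun j => b j = none)).card := by
  have he : Finset.univ.filter (fun j => Function.update b i (some x) j = none)
      = (Finset.univ.filter (fun j => b j = none)).erase i := by
    ext j
    simp only [Finset.mem_filter, Finset.mem_erase, Finset.mem_univ, true_and]
    rcases eq_or_ne j i with rfl | hne
    · simp [Function.update_self]
    · simp [Function.update_of_ne hne, hne]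
  rw [he, Finset.card_erase_add_one (by simp [hi])]

lemma misere_safe_of_card (m : ℕ) : ∀ {n : ℕ} (w : Bool) (b : Fin n → Option Letter),
    (Finset.univ.filter (fun j => b j = none)).card = m →
    ¬ Achieves [S,O,S] b → MisereSafe (Achieves [S,O,S]) m w b := by
  induction m with
  | zero => intro n w b _ _; cases w <;> trivial
  | succ m ih =>
    intro n w b hcard hb
    cases w
    · -- opponent's turn
      intro i x hi
      by_cases hw : Achieves [S,O,S] (Function.update b i (some x))
      · exact Or.inl hw
      · exact Or.inr (ih true _
          (by have := card_empties_update b i hi x; omega) hw)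
    · -- tracked player's turn
      have hne : ∃ i, b i = none := by
        by_contra hc
        push_neg at hc
        have : (Finset.univ.filter (fun j => b j = none)).card = 0 := by
          rw [Finset.card_eq_zero, Finset.filter_eq_empty_iff]
          intro j _; exact hc j
        omega
      obtain ⟨i, hi⟩ := hne
      obtain ⟨x, hx⟩ := exists_safe b hb i hi
      exact ⟨i, x, hi, hx, ih false _
        (by have := card_empties_update b i hi x; omega) hx⟩

/-- For every `n ≥ 3`, the misère SOS game on the 1×n board is a draw: each
player has a strategy guaranteeing that they themselves never make the board
achieve SOS. -/
theorem misere_sos_draw (n : ℕ) (hn : 3 ≤ n) : MisereDraw [S, O, S] n := by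
  have hcard : (Finset.univ.filter (fun j => (fun _ : Fin n => (none : Option Letter)) j = none)).card = n := by
    simp
  have hach : ¬ Achieves [S,O,S] (fun _ : Fin n => (none : Option Letter)) := by
    rintro ⟨k, hk⟩
    obtain ⟨h, e⟩ := hk 0 (by norm_num)
    simp at e
  exact ⟨misere_safe_of_card n true _ hcard hach,
    misere_safe_of_card n false _ hcard hach⟩
end

section
/- In the normal game with target SOS = [S,O,S] on the 2×n board (where the target only counts horizontally within a row): if n < 7 the game is a draw (neither player can force a win), and if n ≥ 7 the second player can force a win. -/
open Letter

/-- The target string `t` occurs left-to-right as a consecutive block within a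
single row of the 2×n board `b`. -/
def Achieves2 {n : ℕ} (t : List Letter) (b : Fin 2 × Fin n → Option Letter) : Prop :=
  ∃ r : Fin 2, ∃ i : ℕ, ∀ j : ℕ, (hj : j < t.length) → ∃ h : i + j < n,
    b (r, ⟨i + j, h⟩) = some (t.get ⟨j, hj⟩)

/-!
A *trap* is a pattern `S _ _ S` in a row: whoever writes any letter into one of its two gap
cells hands the opponent an SOS. Writing `O` into a free cell is a blunder exactly when the
cell sits between an `S` and a free cell; if every free cell is of this kind, the free cells
are the gaps of traps and so come in pairs. Hence, while a trap stands, the player to move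
with an odd number of free cells always has a safe `O` outside the gaps and keeps the trap,
and the opponent is eventually forced into a gap: that player wins.

With fewer than 7 columns neither player can force a win. Call a position quiet if it has
no threat, no trap and no pre-trap `S _ _ _` or `_ _ _ S`. From a quiet position the player
to move keeps it quiet with an `O` that creates no threat; and after any move of the opponent
that does not hand over a win, one restores quietness: a new pre-trap can only come from an
`S`, and an `O` in the middle of its three free cells destroys it, because one `S` cannot
start two pre-traps in a row of fewer than 7 cells.

With at least 7 columns (and an even number of rows) the second player answers the first
move by an `S` in column 3 of another row, and after the first player's second move closes a
trap `S _ _ S` in columns 3–6 or 0–3 of that row, whichever is untouched. The first player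
then faces the trap with an even number of free cells.
-/

open Finset

namespace SOSGame

theorem even_card_of_involution {α : Type} {s : Finset α} (g : α → α) (hmem : ∀ a ∈ s, g a ∈ s)
    (hne : ∀ a ∈ s, g a ≠ a) (hinv : ∀ a ∈ s, g (g a) = a) : Even #s := by
  rw [← ZMod.natCast_eq_zero_iff_even, card_eq_sum_ones, Nat.cast_sum, Nat.cast_one]
  exact sum_involution (fun a _ => g a) (fun _ _ => rfl) (fun a ha _ => hne a ha) hmem hinv

section Count

variable {α : Type} [Fintype α]

def emptyCount (b : α → Option Letter) : ℕ := #{c | b c = none}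

theorem emptyCount_pos_iff {b : α → Option Letter} : 0 < emptyCount b ↔ ∃ c, b c = none := by
  simp [emptyCount, card_pos, Finset.Nonempty]

theorem emptyCount_update [DecidableEq α] {b : α → Option Letter} {c : α} (hc : b c = none)
    (x : Letter) : emptyCount (Function.update b c (some x)) + 1 = emptyCount b := by
  have : filter (fun c' => Function.update b c (some x) c' = none) univ =
      (filter (fun c' => b c' = none) univ).erase c := by
    ext c'
    by_cases h : c' = c <;> simp [h, Function.update_apply]
  rw [emptyCount, this, card_erase_add_one (by simpa using hc), emptyCount]

end Count

variable {ι : Type} {n : ℕ}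

abbrev Board (ι : Type) (n : ℕ) := ι × Fin n → Option Letter

/-- The content of column `p` of row `r`; columns beyond the board read as empty. -/
def cell (b : Board ι n) (r : ι) (p : ℕ) : Option Letter :=
  if h : p < n then b (r, ⟨p, h⟩) else none

abbrev IsFree (b : Board ι n) (r : ι) (p : ℕ) : Prop := p < n ∧ cell b r p = none

def SOSAt (b : Board ι n) (r : ι) (a : ℕ) : Prop :=
  cell b r a = some S ∧ cell b r (a + 1) = some O ∧ cell b r (a + 2) = some S

def HasSOS (b : Board ι n) : Prop := ∃ r a, SOSAt b r a

def ThreatAt (b : Board ι n) (r : ι) (a : ℕ) : Prop :=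
  (IsFree b r a ∧ cell b r (a + 1) = some O ∧ cell b r (a + 2) = some S) ∨
  (cell b r a = some S ∧ IsFree b r (a + 1) ∧ cell b r (a + 2) = some S) ∨
  (cell b r a = some S ∧ cell b r (a + 1) = some O ∧ IsFree b r (a + 2))

def HasThreat (b : Board ι n) : Prop := ∃ r a, ThreatAt b r a

def TrapAt (b : Board ι n) (r : ι) (a : ℕ) : Prop :=
  cell b r a = some S ∧ IsFree b r (a + 1) ∧ IsFree b r (a + 2) ∧ cell b r (a + 3) = some S

def HasTrap (b : Board ι n) : Prop := ∃ r a, TrapAt b r a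

def FreeRun (b : Board ι n) (r : ι) (a : ℕ) : Prop :=
  IsFree b r a ∧ IsFree b r (a + 1) ∧ IsFree b r (a + 2)

def PreTrapAt (b : Board ι n) (r : ι) (a : ℕ) : Prop :=
  (cell b r a = some S ∧ FreeRun b r (a + 1)) ∨ (FreeRun b r a ∧ cell b r (a + 3) = some S)

def HasPreTrap (b : Board ι n) : Prop := ∃ r a, PreTrapAt b r a

/-- An `O` in column `a + 1` would let the opponent complete an SOS. -/
def HalfGapAt (b : Board ι n) (r : ι) (a : ℕ) : Prop :=
  (cell b r a = some S ∧ IsFree b r (a + 2)) ∨ (IsFree b r a ∧ cell b r (a + 2) = some S)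

def IsQuiet (b : Board ι n) : Prop := ¬ HasSOS b ∧ ¬ HasThreat b ∧ ¬ HasTrap b ∧ ¬ HasPreTrap b

theorem cell_of_lt {b : Board ι n} {r : ι} {p : ℕ} (h : p < n) : cell b r p = b (r, ⟨p, h⟩) :=
  dif_pos h

theorem lt_of_cell_eq_some {b : Board ι n} {r : ι} {p : ℕ} {x : Letter}
    (h : cell b r p = some x) : p < n := by
  by_contra hp
  simp [cell, hp] at h

theorem cell_empty {r : ι} {p : ℕ} : cell (fun _ => none : Board ι n) r p = none := by
  unfold cell; split_ifs <;> rfl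

theorem achieves2_sos_iff {b : Board (Fin 2) n} : Achieves2 [S, O, S] b ↔ HasSOS b := by
  constructor
  · rintro ⟨r, i, hw⟩
    obtain ⟨h0, e0⟩ := hw 0 (by simp)
    obtain ⟨h1, e1⟩ := hw 1 (by simp)
    obtain ⟨h2, e2⟩ := hw 2 (by simp)
    exact ⟨r, i, (cell_of_lt h0).trans e0, (cell_of_lt h1).trans e1, (cell_of_lt h2).trans e2⟩
  · rintro ⟨r, i, h0, h1, h2⟩
    refine ⟨r, i, fun j hj => ?_⟩
    simp only [List.length_cons, List.length_nil] at hj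
    interval_cases j
    · exact ⟨lt_of_cell_eq_some h0, (cell_of_lt _).symm.trans h0⟩
    · exact ⟨lt_of_cell_eq_some h1, (cell_of_lt _).symm.trans h1⟩
    · exact ⟨lt_of_cell_eq_some h2, (cell_of_lt _).symm.trans h2⟩

theorem isQuiet_empty : IsQuiet (fun _ => none : Board ι n) := by
  refine ⟨?_, ?_, ?_, ?_⟩ <;> rintro ⟨r, a, h⟩ <;>
    simp [SOSAt, ThreatAt, TrapAt, PreTrapAt, cell_empty] at h

section

variable [Fintype ι]

theorem emptyCount_empty : emptyCount (fun _ => none : Board ι n) = Fintype.card ι * n := by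
  simp [emptyCount]

theorem emptyCount_pos_iff_exists_isFree {b : Board ι n} :
    0 < emptyCount b ↔ ∃ r p, IsFree b r p := by
  rw [emptyCount_pos_iff]
  constructor
  · rintro ⟨⟨r, p⟩, h⟩
    exact ⟨r, p, p.2, (cell_of_lt p.2).trans h⟩
  · rintro ⟨r, p, hp, h⟩
    exact ⟨(r, ⟨p, hp⟩), (cell_of_lt hp).symm.trans h⟩

end

section HalfGaps

variable {b : Board ι n}

theorem exists_trapAt_of_forall_halfGapAt
    (hall : ∀ r p, IsFree b r p → ∃ a, p = a + 1 ∧ HalfGapAt b r a) {r : ι} {p : ℕ}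
    (hp : IsFree b r p) : ∃ a, TrapAt b r a ∧ (p = a + 1 ∨ p = a + 2) := by
  obtain ⟨a, rfl, ⟨hS, hf⟩ | ⟨hf, hS⟩⟩ := hall r p hp
  · obtain ⟨a', ha', ⟨hS', -⟩ | ⟨-, hS'⟩⟩ := hall r (a + 2) hf
    · obtain rfl : a' = a + 1 := by omega
      simp [hp.2] at hS'
    · obtain rfl : a' = a + 1 := by omega
      exact ⟨a, ⟨hS, hp, hf, hS'⟩, Or.inl rfl⟩
  · obtain ⟨a', rfl, ⟨hS', -⟩ | ⟨-, hS'⟩⟩ := hall r a hf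
    · exact ⟨a', ⟨hS', hf, hp, hS⟩, Or.inr rfl⟩
    · simp [hp.2] at hS'

theorem even_emptyCount_of_forall_halfGapAt [Fintype ι]
    (hall : ∀ r p, IsFree b r p → ∃ a, p = a + 1 ∧ HalfGapAt b r a) : Even (emptyCount b) := by
  let partner : ι × Fin n → ι × Fin n := fun c =>
    if h : c.2 + 1 < n ∧ cell b c.1 (c.2 - 1) = some S then (c.1, ⟨c.2 + 1, h.1⟩)
    else (c.1, ⟨c.2 - 1, by omega⟩)
  have hfree : ∀ c : ι × Fin n, b c = none ↔ IsFree b c.1 c.2 := fun c =>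
    ⟨fun hc => ⟨c.2.2, (cell_of_lt c.2.2).trans hc⟩, fun hc => (cell_of_lt c.2.2).symm.trans hc.2⟩
  have key : ∀ c : ι × Fin n, b c = none →
      b (partner c) = none ∧ partner c ≠ c ∧ partner (partner c) = c := by
    rintro ⟨r, q, hq⟩ hc
    obtain ⟨a, ⟨hS, h1, h2, -⟩, rfl | rfl⟩ :=
      exists_trapAt_of_forall_halfGapAt hall ((hfree _).1 hc)
    · have hp : partner (r, ⟨a + 1, hq⟩) = (r, ⟨a + 2, h2.1⟩) := by simp [partner, h2.1, hS]
      have hp' : partner (r, ⟨a + 2, h2.1⟩) = (r, ⟨a + 1, hq⟩) := by simp [partner, h1.2]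
      simpa [hp, hp', hfree] using h2
    · have hp : partner (r, ⟨a + 2, hq⟩) = (r, ⟨a + 1, h1.1⟩) := by simp [partner, h1.2]
      have hp' : partner (r, ⟨a + 1, h1.1⟩) = (r, ⟨a + 2, hq⟩) := by simp [partner, hq, hS]
      simpa [hp, hp', hfree] using h1
  exact even_card_of_involution partner (fun c hc => by simpa using (key c (by simpa using hc)).1)
    (fun c hc => (key c (by simpa using hc)).2.1) (fun c hc => (key c (by simpa using hc)).2.2)

end HalfGaps

variable [DecidableEq ι]

def place (b : Board ι n) (r : ι) (p : ℕ) (h : p < n) (x : Letter) : Board ι n :=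
  Function.update b (r, ⟨p, h⟩) (some x)

theorem cell_place {b : Board ι n} {ρ r : ι} {j p : ℕ} {h : j < n} {x : Letter} :
    cell (place b ρ j h x) r p = if ρ = r ∧ j = p then some x else cell b r p := by
  unfold cell place
  by_cases hp : p < n
  · simp [hp, Function.update_apply, Prod.ext_iff, Fin.ext_iff, eq_comm]
  · simp only [hp, dite_false]
    split_ifs
    · omega
    · rfl

theorem isFree_place {b : Board ι n} {ρ r : ι} {j p : ℕ} {h : j < n} {x : Letter} :
    IsFree (place b ρ j h x) r p ↔ ¬(ρ = r ∧ j = p) ∧ IsFree b r p := by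
  unfold IsFree; rw [cell_place]; split_ifs <;> simp_all

section Force

variable [Fintype ι]

theorem emptyCount_place {b : Board ι n} {r : ι} {p : ℕ} (h : IsFree b r p) (x : Letter) :
    emptyCount (place b r p h.1 x) + 1 = emptyCount b :=
  emptyCount_update ((cell_of_lt h.1).symm.trans h.2) x

theorem force_emptyCount_iff (W : Board ι n → Prop) {w : Bool} {b : Board ι n} :
    Force W (emptyCount b) w b ↔ (emptyCount b = 0 ∧ w = false) ∨
      ∃ r p, ∃ h : IsFree b r p, ∃ x, W (place b r p h.1 x) ∨
        ¬ Force W (emptyCount (place b r p h.1 x)) (!w) (place b r p h.1 x) := by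
  rcases hb : emptyCount b with _ | k
  · have : ¬ ∃ r p, IsFree b r p := by rw [← emptyCount_pos_iff_exists_isFree]; omega
    simp only [Force, true_and, iff_self_or]
    rintro ⟨r, p, h, -⟩
    exact absurd ⟨r, p, h⟩ this
  · simp only [Force, add_eq_zero, one_ne_zero, and_false, false_and, false_or]
    constructor
    · rintro ⟨⟨r, p⟩, x, hc, hmove⟩
      have hp : IsFree b r p := ⟨p.2, (cell_of_lt p.2).trans hc⟩
      refine ⟨r, p, hp, x, ?_⟩
      rwa [Nat.add_right_cancel_iff.mp ((emptyCount_place hp x).trans hb)]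
    · rintro ⟨r, p, hp, x, hmove⟩
      refine ⟨(r, ⟨p, hp.1⟩), x, (cell_of_lt hp.1).symm.trans hp.2, ?_⟩
      rwa [Nat.add_right_cancel_iff.mp ((emptyCount_place hp x).trans hb)] at hmove

end Force

section Place

variable {b : Board ι n} {ρ r : ι} {j a : ℕ} {h : j < n} {x : Letter}

theorem sosAt_place (hj : cell b ρ j = none) (hs : SOSAt (place b ρ j h x) r a) :
    SOSAt b r a ∨ ThreatAt b r a := by
  unfold SOSAt ThreatAt at *
  simp only [cell_place] at hs
  grind (splits := 40)

theorem trapAt_place (hj : cell b ρ j = none) (ht : TrapAt (place b ρ j h x) r a) :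
    TrapAt b r a ∨ (x = S ∧ PreTrapAt b r a) := by
  unfold TrapAt PreTrapAt FreeRun at *
  simp only [cell_place, isFree_place] at ht
  grind (splits := 40)

theorem preTrapAt_place (hp : PreTrapAt (place b ρ j h x) r a) :
    (¬(ρ = r ∧ a ≤ j ∧ j ≤ a + 3) ∧ PreTrapAt b r a) ∨
      (x = S ∧ ρ = r ∧ ((j = a ∧ FreeRun b r (a + 1)) ∨ (j = a + 3 ∧ FreeRun b r a))) := by
  unfold PreTrapAt FreeRun at *
  simp only [cell_place, isFree_place] at hp
  grind (splits := 40)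

theorem TrapAt.threatAt_or_trapAt_place (ht : TrapAt b r a) (hj : cell b ρ j = none) :
    ThreatAt (place b ρ j h x) r a ∨ ThreatAt (place b ρ j h x) r (a + 1) ∨
      TrapAt (place b ρ j h x) r a := by
  unfold TrapAt ThreatAt at *
  simp only [cell_place, isFree_place]
  by_cases hgap : ρ = r ∧ (j = a + 1 ∨ j = a + 2)
  · obtain ⟨rfl, rfl | rfl⟩ := hgap <;> cases x <;> grind
  · grind

theorem halfGapAt_of_threatAt_place_O (hT : ¬ ThreatAt b r a)
    (ht : ThreatAt (place b ρ j h O) r a) : ρ = r ∧ j = a + 1 ∧ HalfGapAt b r a := by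
  unfold ThreatAt HalfGapAt at *
  simp only [cell_place, isFree_place] at ht
  grind (splits := 40)

theorem hasThreat_of_hasSOS_place (hs : ¬ HasSOS b) (hj : cell b ρ j = none)
    (hs' : HasSOS (place b ρ j h x)) : HasThreat b := by
  obtain ⟨r, a, hsa⟩ := hs'
  exact (sosAt_place hj hsa).elim (fun hsa => absurd ⟨r, a, hsa⟩ hs) fun ht => ⟨r, a, ht⟩

theorem hasThreat_place_O (hT : ¬ HasThreat b) (hT' : HasThreat (place b ρ j h O)) :
    ∃ a, j = a + 1 ∧ HalfGapAt b ρ a := by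
  obtain ⟨r, a, ht⟩ := hT'
  obtain ⟨rfl, rfl, hg⟩ := halfGapAt_of_threatAt_place_O (fun ht => hT ⟨r, a, ht⟩) ht
  exact ⟨a, rfl, hg⟩

theorem not_hasThreat_place_of_isolated (hT : ¬ HasThreat b)
    (hiso : ∀ p, p ≠ j → p ≤ j + 2 → j ≤ p + 2 → cell b ρ p = none) :
    ¬ HasThreat (place b ρ j h x) := by
  rintro ⟨r, a, ht⟩
  apply hT ⟨r, a, ?_⟩
  have := hiso a; have := hiso (a + 1); have := hiso (a + 2)
  unfold ThreatAt at *
  simp only [cell_place, isFree_place] at ht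
  grind (splits := 40)

theorem ThreatAt.exists_hasSOS_place (ht : ThreatAt b r a) :
    ∃ p, ∃ hp : IsFree b r p, ∃ x, HasSOS (place b r p hp.1 x) := by
  rcases ht with ⟨hp, h1, h2⟩ | ⟨h0, hp, h2⟩ | ⟨h0, h1, hp⟩
  · exact ⟨a, hp, S, r, a, by simp [SOSAt, cell_place, h1, h2]⟩
  · exact ⟨a + 1, hp, O, r, a, by simp [SOSAt, cell_place, h0, h2]⟩
  · exact ⟨a + 2, hp, S, r, a, by simp [SOSAt, cell_place, h0, h1]⟩

theorem exists_not_hasThreat_place_O (hT : ¬ HasThreat b) (htrap : ¬ HasTrap b)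
    (hj : IsFree b ρ j) : ∃ r p, ∃ hp : IsFree b r p, ¬ HasThreat (place b r p hp.1 O) := by
  by_contra! hall
  obtain ⟨a, ht, -⟩ :=
    exists_trapAt_of_forall_halfGapAt (fun r p hp => hasThreat_place_O hT (hall r p hp)) hj
  exact htrap ⟨ρ, a, ht⟩

theorem TrapAt.exists_not_hasThreat_place_O [Fintype ι] (ht : TrapAt b r a)
    (hT : ¬ HasThreat b) (hodd : Odd (emptyCount b)) :
    ∃ r' p, ∃ hp : IsFree b r' p, ¬(r' = r ∧ (p = a + 1 ∨ p = a + 2)) ∧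
      ¬ HasThreat (place b r' p hp.1 O) := by
  by_contra! hall
  refine Nat.not_even_iff_odd.2 hodd (even_emptyCount_of_forall_halfGapAt fun r' p hp => ?_)
  by_cases hgap : r' = r ∧ (p = a + 1 ∨ p = a + 2)
  · obtain ⟨rfl, rfl | rfl⟩ := hgap
    exacts [⟨a, rfl, Or.inl ⟨ht.1, ht.2.2.1⟩⟩, ⟨a + 1, rfl, Or.inr ⟨ht.2.1, ht.2.2.2⟩⟩]
  · exact hasThreat_place_O hT (hall r' p hp (by tauto))

theorem IsQuiet.place_O (hq : IsQuiet b) (hj : cell b ρ j = none)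
    (hT : ¬ HasThreat (place b ρ j h O)) : IsQuiet (place b ρ j h O) := by
  refine ⟨fun hw => hq.2.1 (hasThreat_of_hasSOS_place hq.1 hj hw), hT, ?_, ?_⟩
  · rintro ⟨r, a, ht⟩
    rcases trapAt_place hj ht with ht | ⟨⟨⟩, -⟩
    exact hq.2.2.1 ⟨r, a, ht⟩
  · rintro ⟨r, a, hp⟩
    rcases preTrapAt_place hp with ⟨-, hp⟩ | ⟨⟨⟩, -⟩
    exact hq.2.2.2 ⟨r, a, hp⟩

/-- Two patterns `S _ _ _` and `_ _ _ S` through the same `S` need 7 columns. -/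
theorem IsQuiet.exists_isQuiet_place_S_place_O (h7 : n < 7) (hq : IsQuiet b) (hj : IsFree b ρ j)
    (hT : ¬ HasThreat (place b ρ j hj.1 S)) {q : ℕ} (hrun : FreeRun b ρ q)
    (hjq : j + 1 = q ∨ j = q + 3) :
    ∃ hp : IsFree (place b ρ j hj.1 S) ρ (q + 1),
      IsQuiet (place (place b ρ j hj.1 S) ρ (q + 1) hp.1 O) := by
  have hp : IsFree (place b ρ j hj.1 S) ρ (q + 1) := isFree_place.2 ⟨by omega, hrun.2.1⟩
  have hs : ¬ HasSOS (place b ρ j hj.1 S) := fun hw =>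
    hq.2.1 (hasThreat_of_hasSOS_place hq.1 hj.2 hw)
  refine ⟨hp, fun hw => hT (hasThreat_of_hasSOS_place hs hp.2 hw), ?_, ?_, ?_⟩
  · intro hT'
    obtain ⟨a, ha, hg⟩ := hasThreat_place_O hT hT'
    obtain rfl : a = q := by omega
    have hja : j ≠ a := by omega
    have hja2 : j ≠ a + 2 := by omega
    rcases hg with ⟨hS, -⟩ | ⟨-, hS⟩ <;>
      simp [cell_place, hja, hja2, hrun.1.2, hrun.2.2.2] at hS
  · rintro ⟨r, a, ht⟩
    rcases trapAt_place hp.2 ht with ht | ⟨⟨⟩, -⟩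
    rcases trapAt_place hj.2 ht with ht | ⟨-, hpre⟩
    exacts [hq.2.2.1 ⟨r, a, ht⟩, hq.2.2.2 ⟨r, a, hpre⟩]
  · rintro ⟨r, a, hpre⟩
    rcases preTrapAt_place hpre with ⟨hout, hpre⟩ | ⟨⟨⟩, -⟩
    rcases preTrapAt_place hpre with ⟨-, hpre⟩ | ⟨-, rfl, ⟨rfl, hrun'⟩ | ⟨rfl, hrun'⟩⟩
    · exact hq.2.2.2 ⟨r, a, hpre⟩
    all_goals
      simp only [true_and, not_and_or, not_le] at hout
      have := hrun.2.2.1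
      have := hrun'.2.2.1
      omega

end Place

variable [Fintype ι]

theorem IsQuiet.exists_isQuiet_place_O {b : Board ι n} (hq : IsQuiet b)
    (hpos : 0 < emptyCount b) : ∃ r p, ∃ hp : IsFree b r p, IsQuiet (place b r p hp.1 O) := by
  obtain ⟨r, p, hp⟩ := emptyCount_pos_iff_exists_isFree.1 hpos
  obtain ⟨r, p, hp, hT⟩ := exists_not_hasThreat_place_O hq.2.1 hq.2.2.1 hp
  exact ⟨r, p, hp, hq.place_O hp.2 hT⟩

theorem IsQuiet.exists_isQuiet_reply (h7 : n < 7) {b : Board ι n} {ρ : ι} {j : ℕ}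
    (hq : IsQuiet b) (hj : IsFree b ρ j) (x : Letter) (hT : ¬ HasThreat (place b ρ j hj.1 x))
    (hpos : 0 < emptyCount (place b ρ j hj.1 x)) :
    ∃ r p, ∃ hp : IsFree (place b ρ j hj.1 x) r p,
      IsQuiet (place (place b ρ j hj.1 x) r p hp.1 O) := by
  have hs : ¬ HasSOS (place b ρ j hj.1 x) := fun hw =>
    hq.2.1 (hasThreat_of_hasSOS_place hq.1 hj.2 hw)
  have htrap : ¬ HasTrap (place b ρ j hj.1 x) := by
    rintro ⟨r, a, ht⟩
    rcases trapAt_place hj.2 ht with ht | ⟨-, hpre⟩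
    exacts [hq.2.2.1 ⟨r, a, ht⟩, hq.2.2.2 ⟨r, a, hpre⟩]
  by_cases hpre : HasPreTrap (place b ρ j hj.1 x)
  · obtain ⟨r, a, hpre⟩ := hpre
    rcases preTrapAt_place hpre with ⟨-, hpre⟩ | ⟨rfl, rfl, ⟨rfl, hrun⟩ | ⟨rfl, hrun⟩⟩
    · exact absurd ⟨r, a, hpre⟩ hq.2.2.2
    · obtain ⟨hp, hq'⟩ := hq.exists_isQuiet_place_S_place_O h7 hj hT hrun (Or.inl rfl)
      exact ⟨_, _, hp, hq'⟩
    · obtain ⟨hp, hq'⟩ := hq.exists_isQuiet_place_S_place_O h7 hj hT hrun (Or.inr rfl)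
      exact ⟨_, _, hp, hq'⟩
  · exact IsQuiet.exists_isQuiet_place_O ⟨hs, hT, htrap, hpre⟩ hpos

theorem IsQuiet.not_force_true (h7 : n < 7) {b : Board ι n} (hq : IsQuiet b) :
    ¬ Force HasSOS (emptyCount b) true b := by
  induction hk : emptyCount b using Nat.strong_induction_on generalizing b with
  | _ k ih =>
  rw [← hk, force_emptyCount_iff]
  rintro (⟨-, ⟨⟩⟩ | ⟨ρ, j, hj, x, hwin | hforce⟩)
  · exact hq.2.1 (hasThreat_of_hasSOS_place hq.1 hj.2 hwin)
  apply hforce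
  rw [force_emptyCount_iff]
  by_cases hT : HasThreat (place b ρ j hj.1 x)
  · obtain ⟨r, a, ht⟩ := hT
    obtain ⟨p, hp, y, hwin⟩ := ht.exists_hasSOS_place
    exact Or.inr ⟨r, p, hp, y, Or.inl hwin⟩
  rcases Nat.eq_zero_or_pos (emptyCount (place b ρ j hj.1 x)) with h0 | hpos
  · exact Or.inl ⟨h0, rfl⟩
  obtain ⟨r, p, hp, hq'⟩ := hq.exists_isQuiet_reply h7 hj x hT hpos
  have := emptyCount_place hj x
  have := emptyCount_place hp O
  exact Or.inr ⟨r, p, hp, O, Or.inr (ih _ (by omega) hq' rfl)⟩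

theorem IsQuiet.force_false (h7 : n < 7) {b : Board ι n} (hq : IsQuiet b) :
    Force HasSOS (emptyCount b) false b := by
  rw [force_emptyCount_iff]
  rcases Nat.eq_zero_or_pos (emptyCount b) with h0 | hpos
  · exact Or.inl ⟨h0, rfl⟩
  obtain ⟨r, p, hp, hq'⟩ := hq.exists_isQuiet_place_O hpos
  exact Or.inr ⟨r, p, hp, O, Or.inr (hq'.not_force_true h7)⟩

theorem force_of_trap (k : ℕ) : ∀ b : Board ι n, emptyCount b = k → ¬ HasSOS b →
    (Odd k → HasThreat b ∨ HasTrap b → Force HasSOS k true b) ∧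
    (Even k → ¬ HasThreat b → HasTrap b → ¬ Force HasSOS k false b) := by
  induction k with
  | zero =>
    refine fun b hb _ => ⟨by simp, fun _ _ ⟨r, a, ht⟩ => ?_⟩
    have := emptyCount_pos_iff_exists_isFree.2 ⟨r, a + 1, ht.2.1⟩
    omega
  | succ k ih =>
    intro b hb hs
    have hk {r p} (hp : IsFree b r p) (x : Letter) : emptyCount (place b r p hp.1 x) = k := by
      have := emptyCount_place hp x; omega
    constructor
    · intro hodd hTT
      rw [← hb, force_emptyCount_iff]
      right
      by_cases hT : HasThreat b
      · obtain ⟨r, a, ht⟩ := hT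
        obtain ⟨p, hp, x, hwin⟩ := ht.exists_hasSOS_place
        exact ⟨r, p, hp, x, Or.inl hwin⟩
      obtain ⟨r, a, ht⟩ := hTT.resolve_left hT
      obtain ⟨r', p, hp, hout, hT'⟩ := ht.exists_not_hasThreat_place_O hT (hb ▸ hodd)
      refine ⟨r', p, hp, O, Or.inr ?_⟩
      rw [hk hp]
      refine (ih _ (hk hp O) (fun hw => hT (hasThreat_of_hasSOS_place hs hp.2 hw))).2
        (by rwa [Nat.odd_add_one, Nat.not_odd_iff_even] at hodd) hT' ⟨r, a, ?_⟩
      rcases ht.threatAt_or_trapAt_place (h := hp.1) (x := O) hp.2 with h | h | h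
      exacts [absurd ⟨r, a, h⟩ hT', absurd ⟨r, a + 1, h⟩ hT', h]
    · rintro heven hT ⟨r, a, ht⟩
      rw [← hb, force_emptyCount_iff]
      rintro (⟨h0, -⟩ | ⟨ρ, j, hj, x, hwin | hforce⟩)
      · omega
      · exact hT (hasThreat_of_hasSOS_place hs hj.2 hwin)
      · apply hforce
        rw [hk hj]
        refine (ih _ (hk hj x) (fun hw => hT (hasThreat_of_hasSOS_place hs hj.2 hw))).1
          (by rwa [Nat.even_add_one, Nat.not_even_iff_odd] at heven) ?_
        rcases ht.threatAt_or_trapAt_place (h := hj.1) (x := x) hj.2 with h | h | h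
        exacts [Or.inl ⟨r, a, h⟩, Or.inl ⟨r, a + 1, h⟩, Or.inr ⟨r, a, h⟩]

theorem force_true_of_isolated_trap_move {b : Board ι n} {r : ι} {p a : ℕ} (hs : ¬ HasSOS b)
    (hT : ¬ HasThreat b) (hodd : Odd (emptyCount b)) (hp : p < n)
    (hiso : ∀ q, q ≤ p + 2 → p ≤ q + 2 → cell b r q = none)
    (ht : TrapAt (place b r p hp S) r a) : Force HasSOS (emptyCount b) true b := by
  have hfree : IsFree b r p := ⟨hp, hiso p (by omega) (by omega)⟩
  rw [← emptyCount_place hfree S, Nat.odd_add_one, Nat.not_odd_iff_even] at hodd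
  rw [force_emptyCount_iff]
  refine Or.inr ⟨r, p, hfree, S, Or.inr ?_⟩
  exact (force_of_trap _ _ rfl (fun hw => hT (hasThreat_of_hasSOS_place hs hfree.2 hw))).2 hodd
    (not_hasThreat_place_of_isolated hT fun q _ h1 h2 => hiso q h1 h2) ⟨r, a, ht⟩

theorem force_true_of_lone_S (h7 : 7 ≤ n) {b : Board ι n} {r : ι} {j : ℕ} (hs : ¬ HasSOS b)
    (hT : ¬ HasThreat b) (hodd : Odd (emptyCount b)) (hS : cell b r 3 = some S)
    (hrow : ∀ p, p ≠ 3 → p ≠ j → cell b r p = none) : Force HasSOS (emptyCount b) true b := by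
  by_cases hj : j < 3
  · refine force_true_of_isolated_trap_move (p := 6) (a := 3) hs hT hodd (by omega)
      (fun q _ _ => hrow q (by omega) (by omega)) ?_
    simp [TrapAt, IsFree, cell_place, hS, hrow 4 (by omega) (by omega),
      hrow 5 (by omega) (by omega)]
    omega
  · refine force_true_of_isolated_trap_move (p := 0) (a := 0) hs hT hodd (by omega)
      (fun q _ _ => hrow q (by omega) (by omega)) ?_
    simp [TrapAt, IsFree, cell_place, hS, hrow 1 (by omega) (by omega),
      hrow 2 (by omega) (by omega)]
    omega

theorem force_true_of_empty_row (h7 : 7 ≤ n) {b : Board ι n} {r : ι} (hs : ¬ HasSOS b)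
    (hT : ¬ HasThreat b) (hodd : Odd (emptyCount b)) (hrow : ∀ p, cell b r p = none) :
    Force HasSOS (emptyCount b) true b := by
  have hfree : IsFree b r 3 := ⟨by omega, hrow 3⟩
  rw [force_emptyCount_iff]
  refine Or.inr ⟨r, 3, hfree, S, Or.inr ?_⟩
  set b₂ := place b r 3 hfree.1 S
  have hc₂ : emptyCount b₂ + 1 = emptyCount b := emptyCount_place hfree S
  have hT₂ : ¬ HasThreat b₂ := not_hasThreat_place_of_isolated hT fun p _ _ _ => hrow p
  have hs₂ : ¬ HasSOS b₂ := fun hw => hT (hasThreat_of_hasSOS_place hs hfree.2 hw)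
  have hS₂ : cell b₂ r 3 = some S := by simp [b₂, cell_place]
  rw [force_emptyCount_iff]
  rintro (⟨h0, -⟩ | ⟨ρ, j, hj, x, hwin | hforce⟩)
  · have hfree₄ : IsFree b₂ r 4 := ⟨by omega, by simp [b₂, cell_place, hrow]⟩
    have := emptyCount_pos_iff_exists_isFree.2 ⟨r, 4, hfree₄⟩
    omega
  · exact hT₂ (hasThreat_of_hasSOS_place hs₂ hj.2 hwin)
  apply hforce
  set b₃ := place b₂ ρ j hj.1 x
  have hc₃ : emptyCount b₃ + 1 = emptyCount b₂ := emptyCount_place hj x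
  by_cases hT₃ : HasThreat b₃
  · obtain ⟨r', a, ht⟩ := hT₃
    obtain ⟨p, hp, y, hwin⟩ := ht.exists_hasSOS_place
    exact (force_emptyCount_iff _).2 (Or.inr ⟨r', p, hp, y, Or.inl hwin⟩)
  have hodd₃ : Odd (emptyCount b₃) := by
    obtain ⟨m, hm⟩ := hodd
    exact ⟨m - 1, by omega⟩
  refine force_true_of_lone_S h7 (r := r) (j := j)
    (fun hw => hT₂ (hasThreat_of_hasSOS_place hs₂ hj.2 hw)) hT₃ hodd₃ ?_ fun p hp3 hpj => ?_
  · rw [cell_place, if_neg]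
    · exact hS₂
    · rintro ⟨rfl, rfl⟩
      exact absurd hj.2 (by simp [hS₂])
  · simp [b₃, b₂, cell_place, hrow, Ne.symm hp3, Ne.symm hpj]

theorem not_force_false_empty [Nontrivial ι] (h7 : 7 ≤ n) (hι : Even (Fintype.card ι)) :
    ¬ Force HasSOS (emptyCount (fun _ => none : Board ι n)) false (fun _ => none : Board ι n) := by
  have hq := (isQuiet_empty : IsQuiet (fun _ => none : Board ι n))
  have hN : 2 * n ≤ emptyCount (fun _ => none : Board ι n) :=
    emptyCount_empty (ι := ι) ▸ Nat.mul_le_mul_right n Fintype.one_lt_card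
  rw [force_emptyCount_iff]
  rintro (⟨h0, -⟩ | ⟨ρ, j, hj, x, hwin | hforce⟩)
  · omega
  · exact hq.2.1 (hasThreat_of_hasSOS_place hq.1 hj.2 hwin)
  obtain ⟨r, hr⟩ := exists_ne ρ
  refine hforce (force_true_of_empty_row h7 (r := r)
    (fun hw => hq.2.1 (hasThreat_of_hasSOS_place hq.1 hj.2 hw))
    (not_hasThreat_place_of_isolated hq.2.1 fun _ _ _ _ => cell_empty) ?_
    fun p => by simp [cell_place, hr.symm, cell_empty])
  have := emptyCount_place hj x
  obtain ⟨m, hm⟩ := hι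
  have hcard : Fintype.card ι * n = 2 * (m * n) := by rw [hm]; ring
  rw [emptyCount_empty, hcard] at this hN
  exact ⟨m * n - 1, by omega⟩

end SOSGame

open SOSGame in
/-- The normal SOS game on the 2×n board (targets count only horizontally
within a row) is a draw for `n < 7` (neither player can force a win), and for
`n ≥ 7` the second player can force a win (the first player cannot even force
a draw). -/
theorem two_by_n_sos_solution (n : ℕ) :
    (n < 7 →
      Force (Achieves2 [S, O, S]) (2 * n) false (fun _ : Fin 2 × Fin n => none) ∧
        ¬ Force (Achieves2 [S, O, S]) (2 * n) true (fun _ : Fin 2 × Fin n => none)) ∧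
    (7 ≤ n →
      ¬ Force (Achieves2 [S, O, S]) (2 * n) false (fun _ : Fin 2 × Fin n => none)) := by
  have hW : (Achieves2 [S, O, S] : Board (Fin 2) n → Prop) = HasSOS :=
    funext fun b => propext achieves2_sos_iff
  have hN : 2 * n = emptyCount (fun _ => none : Board (Fin 2) n) := by simp [emptyCount_empty]
  rw [hW, hN]
  exact ⟨fun h7 => ⟨isQuiet_empty.force_false h7, isQuiet_empty.not_force_true h7⟩,
    fun h7 => not_force_false_empty h7 (by simp)⟩
end

section
/- Let t : List Letter be any target string of length at least 2. In the normal game with target t on the 2×n board (where the target only counts horizontally within a row), for every n the second player can force at least a draw, i.e., the second player has a strategy guaranteeing that the first player never wins. -/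
open Letter

namespace SOSAux

variable {n : ℕ}

/-- The other row. -/
def flip (r : Fin 2) : Fin 2 := 1 - r

lemma flip_ne (r : Fin 2) : flip r ≠ r := by fin_cases r <;> decide

/-- Both rows of the board are identical. -/
def Sym (B : Fin 2 × Fin n → Option Letter) : Prop := ∀ i, B (0, i) = B (1, i)

lemma Sym.get {B : Fin 2 × Fin n → Option Letter} (h : Sym B) (r s : Fin 2) (i : Fin n) :
    B (r, i) = B (s, i) := by
  fin_cases r <;> fin_cases s <;> first | rfl | exact h i | exact (h i).symm

/-- No single move on `B` achieves `t`. -/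
def NoWin (t : List Letter) (B : Fin 2 × Fin n → Option Letter) : Prop :=
  ∀ p x, B p = none → ¬ Achieves2 t (Function.update B p (some x))

lemma noWin_empty (t : List Letter) (ht : 2 ≤ t.length) :
    NoWin t (fun _ : Fin 2 × Fin n => none) := by
  rintro p x - ⟨r, o, hocc⟩
  obtain ⟨h0, e0⟩ := hocc 0 (by omega)
  obtain ⟨h1, e1⟩ := hocc 1 (by omega)
  rw [Function.update_apply] at e0 e1
  by_cases hc0 : ((r, ⟨o + 0, h0⟩) : Fin 2 × Fin n) = p
  · by_cases hc1 : ((r, ⟨o + 1, h1⟩) : Fin 2 × Fin n) = p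
    · have : o + 0 = o + 1 := congrArg (fun q => (q.2 : ℕ)) (hc0.trans hc1.symm)
      omega
    · rw [if_neg hc1] at e1; exact absurd e1 (by simp)
  · rw [if_neg hc0] at e0; exact absurd e0 (by simp)

lemma fin2_cases (s r : Fin 2) : s = r ∨ s = flip r := by
  fin_cases s <;> fin_cases r <;> simp [flip]

/-- Key step: if the board is symmetric, the opponent moves at `(r, i)` with
letter `x`, producing a board with no immediate winning move, then copying `x`
into `(flip r, i)` yields a symmetric board with no immediate winning move. -/
lemma step (t : List Letter) {B : Fin 2 × Fin n → Option Letter} (hSym : Sym B)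
    (r : Fin 2) (i : Fin n) (x : Letter) (hE : B (r, i) = none)
    (hNW : NoWin t (Function.update B (r, i) (some x))) :
    Sym (Function.update (Function.update B (r, i) (some x)) (flip r, i) (some x)) ∧
    NoWin t (Function.update (Function.update B (r, i) (some x)) (flip r, i) (some x)) := by
  set A := Function.update B (r, i) (some x) with hA
  set B2 := Function.update A (flip r, i) (some x) with hB2
  -- evaluation of B2
  have hB2eval : ∀ (s : Fin 2) (j : Fin n), B2 (s, j) = if j = i then some x else B (s, j) := by
    intro s j
    rcases fin2_cases s r with hs | hs <;> rw [hs]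
    · -- s = r: (r,j) ≠ (flip r, i) always
      have hne : ((r, j) : Fin 2 × Fin n) ≠ (flip r, i) :=
        fun h => flip_ne r (congrArg Prod.fst h).symm
      rw [hB2, Function.update_of_ne hne, hA, Function.update_apply]
      by_cases hj : j = i
      · subst hj; rw [if_pos rfl, if_pos rfl]
      · rw [if_neg (fun h => hj (congrArg Prod.snd h)), if_neg hj]
    · have hne : ((flip r, j) : Fin 2 × Fin n) ≠ (r, i) :=
        fun h => flip_ne r (congrArg Prod.fst h)
      rw [hB2, Function.update_apply, hA, Function.update_of_ne hne]
      by_cases hj : j = i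
      · subst hj; rw [if_pos rfl, if_pos rfl]
      · rw [if_neg (fun h => hj (congrArg Prod.snd h)), if_neg hj]
  have hSym2 : Sym B2 := by
    intro j
    rw [hB2eval, hB2eval]
    by_cases hj : j = i <;> simp [hj, hSym j]
  refine ⟨hSym2, ?_⟩
  rintro ⟨s', k⟩ y hq ⟨s, o, hocc⟩
  -- A row r agrees with B2 row r (they differ only at (flip r, i))
  have hAr : ∀ j : Fin n, A (r, j) = B2 (r, j) := by
    intro j
    rw [hB2, Function.update_of_ne (fun h => flip_ne r (congrArg Prod.fst h).symm)]
  by_cases hkP : ∃ j, ∃ hj : j < t.length, ∃ h : o + j < n, (⟨o + j, h⟩ : Fin n) = k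
  · -- the new cell's column k lies in the occurrence window
    obtain ⟨jk, hjk, hk, hkk⟩ := hkP
    obtain ⟨hk', ek⟩ := hocc jk hjk
    have hcol : (⟨o + jk, hk'⟩ : Fin n) = k := hkk
    rw [Function.update_apply] at ek
    have hss' : (s, (⟨o + jk, hk'⟩ : Fin n)) = ((s', k) : Fin 2 × Fin n) := by
      by_contra hc
      rw [if_neg hc, hcol] at ek
      rw [hSym2.get s s' k, hq] at ek
      exact absurd ek (by simp)
    have hs : s = s' := (Prod.mk.injEq _ _ _ _ ▸ hss').1
    rw [if_pos hss'] at ek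
    -- the contradicting move on A : play y at (r, k)
    have hAk : A (r, k) = none := by
      rw [hAr, hSym2.get r s' k]; exact hq
    refine hNW (r, k) y hAk ⟨r, o, ?_⟩
    intro j hj
    obtain ⟨h, hval⟩ := hocc j hj
    refine ⟨h, ?_⟩
    rw [Function.update_apply] at hval ⊢
    by_cases hjc : (⟨o + j, h⟩ : Fin n) = k
    · rw [if_pos (by rw [hjc]), ← hval, if_pos (by rw [hs, hjc])]
    · rw [if_neg (fun h => hjc (congrArg Prod.snd h))]
      rw [if_neg (fun h => hjc (congrArg Prod.snd h))] at hval
      rw [hAr, hSym2.get r s, hval]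
  · -- the occurrence avoids column k: it already exists in B2
    push_neg at hkP
    have hB2ach : Achieves2 t B2 := by
      refine ⟨s, o, ?_⟩
      intro j hj
      obtain ⟨h, hval⟩ := hocc j hj
      refine ⟨h, ?_⟩
      rw [Function.update_apply,
        if_neg (fun hc => hkP j hj h (congrArg Prod.snd hc))] at hval
      exact hval
    have hAe : A (flip r, i) = none := by
      rw [hA, Function.update_of_ne (fun h => flip_ne r (congrArg Prod.fst h))]
      rw [hSym.get (flip r) r i]; exact hE
    exact hNW (flip r, i) x hAe hB2ach

lemma main (t : List Letter) :
    ∀ (m : ℕ) (B : Fin 2 × Fin n → Option Letter), Sym B → NoWin t B →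
      ¬ Force (Achieves2 t) (2 * m) true B := by
  intro m
  induction m with
  | zero => intro B _ _ h; rw [show 2 * 0 = 0 from rfl, Force] at h; exact absurd h (by simp)
  | succ m ih =>
    intro B hSym hNW hF
    rw [show 2 * (m + 1) = 2 * m + 1 + 1 from by ring, Force] at hF
    obtain ⟨⟨r, i⟩, x, hp, hcase⟩ := hF
    rcases hcase with hwin | hnf
    · exact hNW _ x hp hwin
    · apply hnf
      rw [Force]
      by_cases hw : ∃ q z, Function.update B (r, i) (some x) q = none ∧
          Achieves2 t (Function.update (Function.update B (r, i) (some x)) q (some z))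
      · obtain ⟨q, z, hq, hach⟩ := hw
        exact ⟨q, z, hq, Or.inl hach⟩
      · have hNWA : NoWin t (Function.update B (r, i) (some x)) := by
          intro q z hq hach; exact hw ⟨q, z, hq, hach⟩
        obtain ⟨hS2, hNW2⟩ := step t hSym r i x hp hNWA
        refine ⟨(flip r, i), x, ?_, Or.inr ?_⟩
        · rw [Function.update_of_ne (fun h => flip_ne r (congrArg Prod.fst h))]
          rw [hSym.get (flip r) r i]; exact hp
        · exact ih _ hS2 hNW2

end SOSAux

/-- For any target string `t` of length at least 2, in the normal game with
target `t` on the 2×n board (targets count only horizontally within a row),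
the second player can force at least a draw for every `n`: the first player
cannot force a win. -/
theorem two_by_n_second_player_draws (t : List Letter) (ht : 2 ≤ t.length)
    (n : ℕ) :
    ¬ Force (Achieves2 t) (2 * n) true (fun _ : Fin 2 × Fin n => none) := by
  exact SOSAux.main t n _ (fun i => rfl) (SOSAux.noWin_empty t ht)
end

section
/- In the expandable SOS game, the first player can force a win: there is a strategy for player 1 guaranteeing that after finitely many moves the board achieves SOS immediately after one of player 1's moves, against every play of player 2. -/
open Letter

/-- The playable region before move `k` (moves numbered from 1): rows
`< ⌊k/2⌋ + 1` and columns `< ⌊(k-1)/2⌋ + 1`.  So the game starts 1×1, a row is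
appended after each odd-numbered move and a column after each even-numbered
move. -/
def Region (k : ℕ) (p : ℕ × ℕ) : Prop :=
  p.1 < k / 2 + 1 ∧ p.2 < (k - 1) / 2 + 1

/-- The board achieves SOS within the playable region of move `k`: there are
three consecutive cells in a horizontal, vertical, or diagonal line, all lying
in the region, carrying the letters S, O, S in order. -/
def AchievesExp (k : ℕ) (b : ℕ × ℕ → Option Letter) : Prop :=
  ∃ r c : ℕ,
    (Region k (r, c) ∧ Region k (r, c + 1) ∧ Region k (r, c + 2) ∧
      b (r, c) = some S ∧ b (r, c + 1) = some O ∧ b (r, c + 2) = some S) ∨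
    (Region k (r, c) ∧ Region k (r + 1, c) ∧ Region k (r + 2, c) ∧
      b (r, c) = some S ∧ b (r + 1, c) = some O ∧ b (r + 2, c) = some S) ∨
    (Region k (r, c) ∧ Region k (r + 1, c + 1) ∧ Region k (r + 2, c + 2) ∧
      b (r, c) = some S ∧ b (r + 1, c + 1) = some O ∧ b (r + 2, c + 2) = some S) ∨
    (Region k (r, c + 2) ∧ Region k (r + 1, c + 1) ∧ Region k (r + 2, c) ∧
      b (r, c + 2) = some S ∧ b (r + 1, c + 1) = some O ∧ b (r + 2, c) = some S)

/-- `ExpForce m w k b`: in the expandable SOS game, with `k` the number of the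
next move and `b` the current board, player 1 can force that one of player 1's
moves achieves SOS within at most `m` further moves.  Here `w = true` means it
is player 1's turn and `w = false` means it is player 2's turn; a player must
move in an empty cell of the current playable region, and if the player to
move has no legal move the game ends without a winner. -/
def ExpForce : ℕ → Bool → ℕ → (ℕ × ℕ → Option Letter) → Prop
  | 0, _, _, _ => False
  | m + 1, true, k, b => ∃ p : ℕ × ℕ, ∃ x : Letter, Region k p ∧ b p = none ∧
      (AchievesExp k (Function.update b p (some x)) ∨
        ExpForce m false (k + 1) (Function.update b p (some x)))
  | m + 1, false, k, b =>
      (∃ p : ℕ × ℕ, Region k p ∧ b p = none) ∧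
      ∀ p : ℕ × ℕ, ∀ x : Letter, Region k p → b p = none →
        (¬ AchievesExp k (Function.update b p (some x)) ∧
          ExpForce m true (k + 1) (Function.update b p (some x)))


instance : Fintype Letter :=
  ⟨{Letter.S, Letter.O}, by intro x; cases x <;> simp⟩

instance (k : ℕ) (p : ℕ × ℕ) : Decidable (Region k p) :=
  inferInstanceAs (Decidable (p.1 < k / 2 + 1 ∧ p.2 < (k - 1) / 2 + 1))

instance (k : ℕ) (b : ℕ × ℕ → Option Letter) : Decidable (AchievesExp k b) := by
  refine decidable_of_iff (∃ r < k / 2 + 1, ∃ c < (k - 1) / 2 + 1,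
    ((Region k (r, c) ∧ Region k (r, c + 1) ∧ Region k (r, c + 2) ∧
      b (r, c) = some S ∧ b (r, c + 1) = some O ∧ b (r, c + 2) = some S) ∨
    (Region k (r, c) ∧ Region k (r + 1, c) ∧ Region k (r + 2, c) ∧
      b (r, c) = some S ∧ b (r + 1, c) = some O ∧ b (r + 2, c) = some S) ∨
    (Region k (r, c) ∧ Region k (r + 1, c + 1) ∧ Region k (r + 2, c + 2) ∧
      b (r, c) = some S ∧ b (r + 1, c + 1) = some O ∧ b (r + 2, c + 2) = some S) ∨
    (Region k (r, c + 2) ∧ Region k (r + 1, c + 1) ∧ Region k (r + 2, c) ∧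
      b (r, c + 2) = some S ∧ b (r + 1, c + 1) = some O ∧ b (r + 2, c) = some S))) ?_
  constructor
  · rintro ⟨r, _, c, _, h⟩
    exact ⟨r, c, h⟩
  · rintro ⟨r, c, h⟩
    have hb : r < k / 2 + 1 ∧ c < (k - 1) / 2 + 1 := by
      rcases h with h | h | h | h
      · obtain ⟨⟨h1, h2⟩, -⟩ := h; exact ⟨h1, h2⟩
      · obtain ⟨⟨h1, h2⟩, -⟩ := h; exact ⟨h1, h2⟩
      · obtain ⟨⟨h1, h2⟩, -⟩ := h; exact ⟨h1, h2⟩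
      · obtain ⟨⟨h1, h2⟩, -⟩ := h
        have h2' : c + 2 < (k - 1) / 2 + 1 := h2
        exact ⟨h1, by omega⟩
    exact ⟨r, hb.1, c, hb.2, h⟩

def expForceDec : (m : ℕ) → (w : Bool) → (k : ℕ) → (b : ℕ × ℕ → Option Letter) →
    Decidable (ExpForce m w k b)
  | 0, _, _, _ => isFalse (fun h => h)
  | m + 1, true, k, b =>
    haveI : ∀ b', Decidable (ExpForce m false (k + 1) b') :=
      fun b' => expForceDec m false (k + 1) b'
    decidable_of_iff (∃ r < k / 2 + 1, ∃ c < (k - 1) / 2 + 1, ∃ x : Letter,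
      b (r, c) = none ∧
      (AchievesExp k (Function.update b (r, c) (some x)) ∨
        ExpForce m false (k + 1) (Function.update b (r, c) (some x)))) (by
      constructor
      · rintro ⟨r, hr, c, hc, x, hb, h⟩
        exact ⟨(r, c), x, ⟨hr, hc⟩, hb, h⟩
      · rintro ⟨⟨r, c⟩, x, ⟨hr, hc⟩, hb, h⟩
        exact ⟨r, hr, c, hc, x, hb, h⟩)
  | m + 1, false, k, b =>
    haveI : ∀ b', Decidable (ExpForce m true (k + 1) b') :=
      fun b' => expForceDec m true (k + 1) b'
    decidable_of_iff ((∃ r < k / 2 + 1, ∃ c < (k - 1) / 2 + 1, b (r, c) = none) ∧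
      ∀ r < k / 2 + 1, ∀ c < (k - 1) / 2 + 1, ∀ x : Letter, b (r, c) = none →
        (¬ AchievesExp k (Function.update b (r, c) (some x)) ∧
          ExpForce m true (k + 1) (Function.update b (r, c) (some x)))) (by
      constructor
      · rintro ⟨⟨r, hr, c, hc, hb⟩, hall⟩
        refine ⟨⟨(r, c), ⟨hr, hc⟩, hb⟩, ?_⟩
        rintro ⟨pr, pc⟩ x ⟨h1, h2⟩ hb'
        exact hall pr h1 pc h2 x hb'
      · rintro ⟨⟨⟨r, c⟩, ⟨hr, hc⟩, hb⟩, hall⟩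
        exact ⟨⟨r, hr, c, hc, hb⟩, fun r hr c hc x hb' => hall (r, c) x ⟨hr, hc⟩ hb'⟩)

instance (m : ℕ) (w : Bool) (k : ℕ) (b : ℕ × ℕ → Option Letter) :
    Decidable (ExpForce m w k b) := expForceDec m w k b

set_option maxRecDepth 1000000 in
set_option maxHeartbeats 4000000 in
/-- In the expandable SOS game, the first player can force a win: starting
from the empty 1×1 board with player 1 to make move 1, player 1 has a strategy
guaranteeing that after finitely many moves the board achieves SOS immediately
after one of player 1's moves, against every play of player 2. -/
theorem expandable_sos_first_player_wins :
    ∃ m : ℕ, ExpForce m true 1 (fun _ : ℕ × ℕ => none) := by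
  refine ⟨7, (0, 0), O, by decide, by decide, Or.inr ?_⟩
  constructor
  · exact ⟨(1, 0), by decide, by decide⟩
  rintro ⟨pr, pc⟩ x ⟨h1, h2⟩ hemp
  have h1' : pr < 2 := by omega
  have h2' : pc < 1 := by omega
  interval_cases pr <;> interval_cases pc
  · exact absurd hemp (by decide)
  cases x with
  | S =>
    -- P2 played S at (1,0); P1 answers O at (1,1)
    refine ⟨by decide, (1, 1), O, by decide, by decide, Or.inr ?_⟩
    constructor
    · exact ⟨(2, 0), by decide, by decide⟩
    rintro ⟨qr, qc⟩ y ⟨g1, g2⟩ gemp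
    have g1' : qr < 3 := by omega
    have g2' : qc < 2 := by omega
    interval_cases qr <;> interval_cases qc
    · exact absurd gemp (by decide)
    · cases y with
      | S => exact ⟨by decide, by decide⟩
      | O => exact ⟨by decide, by decide⟩
    · exact absurd gemp (by decide)
    · exact absurd gemp (by decide)
    · cases y with
      | S => exact ⟨by decide, by decide⟩
      | O => exact ⟨by decide, by decide⟩
    · cases y with
      | S => exact ⟨by decide, by decide⟩
      | O => exact ⟨by decide, by decide⟩
  | O =>
    -- P2 played O at (1,0); P1 answers S at (0,1)
    refine ⟨by decide, (0, 1), S, by decide, by decide, Or.inr ?_⟩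
    constructor
    · exact ⟨(2, 0), by decide, by decide⟩
    rintro ⟨qr, qc⟩ y ⟨g1, g2⟩ gemp
    have g1' : qr < 3 := by omega
    have g2' : qc < 2 := by omega
    interval_cases qr <;> interval_cases qc
    · exact absurd gemp (by decide)
    · exact absurd gemp (by decide)
    · exact absurd gemp (by decide)
    · cases y with
      | S => exact ⟨by decide, by decide⟩
      | O => exact ⟨by decide, by decide⟩
    · cases y with
      | S => exact ⟨by decide, by decide⟩
      | O => exact ⟨by decide, by decide⟩
    · cases y with
      | S => exact ⟨by decide, by decide⟩
      | O => exact ⟨by decide, by decide⟩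
end

section
/- In the restricted-placement SOS game on the 3×3 board, the first player can force a win. -/
open Letter

/-- The 3×3 board achieves SOS: the letters S, O, S appear in order in three
consecutive cells of a row, a column, or one of the two main diagonals (either
direction along a line gives the same condition, since SOS is a palindrome). -/
def Win3 (b : Fin 3 × Fin 3 → Option Letter) : Prop :=
  (∃ r : Fin 3, b (r, 0) = some S ∧ b (r, 1) = some O ∧ b (r, 2) = some S) ∨
  (∃ c : Fin 3, b (0, c) = some S ∧ b (1, c) = some O ∧ b (2, c) = some S) ∨
  (b (0, 0) = some S ∧ b (1, 1) = some O ∧ b (2, 2) = some S) ∨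
  (b (0, 2) = some S ∧ b (1, 1) = some O ∧ b (2, 0) = some S)

/-- `Allowed cons p`: the cell `p` is a legal location for the next move, given
the placement constraint `cons` (`none` for the first move, where any cell is
allowed; `some c` when the previous move was in column `c`, forcing play in
row `c`). -/
def Allowed (cons : Option (Fin 3)) (p : Fin 3 × Fin 3) : Prop :=
  match cons with
  | none => True
  | some c => p.1 = c

/-- `RPForce m w cons b`: in the restricted-placement SOS game on the board
`b` with `m` empty cells, current placement constraint `cons`, player 1 can
force a win.  Here `w = true` means it is player 1's turn, `w = false` that it
is player 2's turn; a player must place a letter in an empty allowed cell, if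
a player's move achieves SOS that player wins, and if the player to move has
no legal move the game ends without a winner. -/
def RPForce : ℕ → Bool → Option (Fin 3) → (Fin 3 × Fin 3 → Option Letter) → Prop
  | 0, _, _, _ => False
  | m + 1, true, cons, b => ∃ p : Fin 3 × Fin 3, ∃ x : Letter,
      Allowed cons p ∧ b p = none ∧
      (Win3 (Function.update b p (some x)) ∨
        RPForce m false (some p.2) (Function.update b p (some x)))
  | m + 1, false, cons, b =>
      (∃ p : Fin 3 × Fin 3, Allowed cons p ∧ b p = none) ∧
      ∀ p : Fin 3 × Fin 3, ∀ x : Letter, Allowed cons p → b p = none →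
        (¬ Win3 (Function.update b p (some x)) ∧
          RPForce m true (some p.2) (Function.update b p (some x)))


instance decWin3 (b : Fin 3 × Fin 3 → Option Letter) : Decidable (Win3 b) := by
  unfold Win3; infer_instance

instance decAllowed (cons : Option (Fin 3)) (p : Fin 3 × Fin 3) :
    Decidable (Allowed cons p) := by
  cases cons <;> simp [Allowed] <;> infer_instance

instance decRPForce : ∀ (m : ℕ) (w : Bool) (cons : Option (Fin 3))
    (b : Fin 3 × Fin 3 → Option Letter), Decidable (RPForce m w cons b)
  | 0, _, _, _ => isFalse (fun h => h)
  | m + 1, true, cons, b =>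
      haveI := decRPForce m
      inferInstanceAs (Decidable (∃ p : Fin 3 × Fin 3, ∃ x : Letter,
        Allowed cons p ∧ b p = none ∧
        (Win3 (Function.update b p (some x)) ∨
          RPForce m false (some p.2) (Function.update b p (some x)))))
  | m + 1, false, cons, b =>
      haveI := decRPForce m
      inferInstanceAs (Decidable ((∃ p : Fin 3 × Fin 3, Allowed cons p ∧ b p = none) ∧
        ∀ p : Fin 3 × Fin 3, ∀ x : Letter, Allowed cons p → b p = none →
          (¬ Win3 (Function.update b p (some x)) ∧
            RPForce m true (some p.2) (Function.update b p (some x)))))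

set_option maxRecDepth 100000 in
/-- In the restricted-placement SOS game on the 3×3 board, the first player
can force a win from the initial (empty, unconstrained) position. -/
theorem restricted_placement_first_player_wins :
    RPForce 9 true none (fun _ : Fin 3 × Fin 3 => none) := by
  decide
end

section
/- In the normal game with target SOS = [S,O,S] on the 1×n board, consider any position (a board together with the player to move) whose board does not achieve SOS but contains a losing pair, i.e., there is an index i with b i = some S, b (i+1) = none, b (i+2) = none, and b (i+3) = some S. Then the game from this position is not a draw: either the player to move can force a win or the other player can force a win. -/
open Letter

/-!
Write `S _ _ S` for a losing pair. Whoever fills one of its two blanks hands the opponent an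
SOS: after `S S _ S` or `S _ S S` the reply `O` wins, after `S O _ S` or `S _ O S` the reply `S`.
So a move that lets the mover draw is either an immediate win or lies outside the pair; in the
latter case the pair survives, and by induction on the number of empty cells the opponent, who
cannot win, cannot draw either. Hence drawing and winning coincide for the player to move.
-/

def numEmpty {α : Type} [Fintype α] (b : α → Option Letter) : ℕ :=
  (Finset.univ.filter fun j : α => b j = none).card

def LosingPairAt {n : ℕ} (b : Fin n → Option Letter) (p : ℕ) : Prop :=
  ∃ h : p + 3 < n, b ⟨p, Nat.lt_of_add_right_lt h⟩ = some S ∧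
    b ⟨p + 1, Nat.lt_of_add_right_lt (k := 2) h⟩ = none ∧
    b ⟨p + 2, Nat.lt_of_add_right_lt (k := 1) h⟩ = none ∧ b ⟨p + 3, h⟩ = some S

section numEmpty

variable {α : Type} [Fintype α] {b : α → Option Letter} {i : α}

lemma numEmpty_pos (hi : b i = none) : 0 < numEmpty b :=
  Finset.card_pos.mpr ⟨i, by simp [hi]⟩

lemma numEmpty_update_add_one [DecidableEq α] (hi : b i = none) (x : Letter) :
    numEmpty (Function.update b i (some x)) + 1 = numEmpty b := by
  have hfilter : (Finset.univ.filter fun j => Function.update b i (some x) j = none) =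
      (Finset.univ.filter fun j => b j = none).erase i := by
    ext j
    rcases eq_or_ne j i with rfl | hne
    · simp
    · simp [hne]
  rw [numEmpty, hfilter, Finset.card_erase_add_one (by simp [hi]), numEmpty]

end numEmpty

lemma force_succ_of_win {α : Type} [DecidableEq α] {Win : (α → Option Letter) → Prop}
    {b : α → Option Letter} {i : α} {x : Letter} (m : ℕ) (w : Bool) (hi : b i = none)
    (hwin : Win (Function.update b i (some x))) : Force Win (m + 1) w b :=
  ⟨i, x, hi, Or.inl hwin⟩

section SOS

variable {n : ℕ} {b : Fin n → Option Letter} {p : ℕ}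

lemma achieves_sos (p : ℕ) (h : p + 2 < n) (h0 : b ⟨p, by omega⟩ = some S)
    (h1 : b ⟨p + 1, by omega⟩ = some O) (h2 : b ⟨p + 2, h⟩ = some S) :
    Achieves [S, O, S] b := by
  refine ⟨p, fun j hj => ?_⟩
  simp only [List.length_cons, List.length_nil] at hj
  interval_cases j
  exacts [⟨_, h0⟩, ⟨_, h1⟩, ⟨_, h2⟩]

lemma LosingPairAt.exists_win_after_move_inside (hp : LosingPairAt b p) {c : Fin n}
    (hc : c.val = p + 1 ∨ c.val = p + 2) (x : Letter) :
    ∃ j y, Function.update b c (some x) j = none ∧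
      Achieves [S, O, S] (Function.update (Function.update b c (some x)) j (some y)) := by
  obtain ⟨h, h0, h1, h2, h3⟩ := hp
  rcases hc with hc | hc
  · rw [show c = ⟨p + 1, by omega⟩ from Fin.ext hc]
    refine ⟨⟨p + 2, by omega⟩, if x = S then O else S, by simp [h2], ?_⟩
    cases x
    · exact achieves_sos (p + 1) h (by simp) (by simp) (by simp [h3])
    · exact achieves_sos p (by omega) (by simp [h0]) (by simp) (by simp)
  · rw [show c = ⟨p + 2, by omega⟩ from Fin.ext hc]
    refine ⟨⟨p + 1, by omega⟩, if x = S then O else S, by simp [h1], ?_⟩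
    cases x
    · exact achieves_sos p (by omega) (by simp [h0]) (by simp) (by simp)
    · exact achieves_sos (p + 1) h (by simp) (by simp) (by simp [h3])

lemma LosingPairAt.update (hp : LosingPairAt b p) {c : Fin n} (hc : b c = none)
    (hc1 : c.val ≠ p + 1) (hc2 : c.val ≠ p + 2) (x : Letter) :
    LosingPairAt (Function.update b c (some x)) p := by
  obtain ⟨h, h0, h1, h2, h3⟩ := hp
  have hc0 : c.val ≠ p := by
    intro he
    rw [show c = ⟨p, by omega⟩ from Fin.ext he, h0] at hc
    cases hc
  have hc3 : c.val ≠ p + 3 := by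
    intro he
    rw [show c = ⟨p + 3, h⟩ from Fin.ext he, h3] at hc
    cases hc
  refine ⟨h, ?_, ?_, ?_, ?_⟩ <;>
    rwa [Function.update_of_ne (Fin.ne_of_val_ne (by simp only; omega))]

lemma LosingPairAt.force_true_of_force_false (hp : LosingPairAt b p)
        (hdraw : Force (Achieves [S, O, S]) (numEmpty b) false b) :
    Force (Achieves [S, O, S]) (numEmpty b) true b := by
  induction hm : numEmpty b generalizing b with
  | zero =>
    obtain ⟨h, -, h1, -⟩ := hp
    exact absurd hm (numEmpty_pos h1).ne'
  | succ m ih =>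
    rw [hm] at hdraw
    obtain ⟨i, x, hi, hwin | hlose⟩ := hdraw
    · exact force_succ_of_win m true hi hwin
    refine ⟨i, x, hi, Or.inr fun hdraw' => hlose ?_⟩
    have hm' : numEmpty (Function.update b i (some x)) = m := by
      have := numEmpty_update_add_one hi x
      omega
    by_cases hinside : i.val = p + 1 ∨ i.val = p + 2
    · obtain ⟨j, y, hj, hwin'⟩ := hp.exists_win_after_move_inside hinside x
      obtain ⟨k, rfl⟩ := Nat.exists_eq_add_one.mpr (hm' ▸ numEmpty_pos hj)
      exact force_succ_of_win k true hj hwin'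
    · push Not at hinside
      exact hm' ▸ ih (hp.update hi hinside.1 hinside.2 x) (hm'.symm ▸ hdraw') hm'

end SOS

/-- Consider any position in the normal SOS game on the 1×n board: a board `b`
together with the player to move.  If `b` does not achieve SOS but contains a
losing pair — an index `i` with `b i = S`, `b (i+1) = none`, `b (i+2) = none`,
`b (i+3) = S` — then the game from this position is not a draw: either the
player to move can force a win, or the other player can force a win (i.e. the
player to move cannot force even a draw). -/
theorem losing_pair_not_draw {n : ℕ} (b : Fin n → Option Letter)
    (hpair : ∃ i : ℕ, ∃ h : i + 3 < n,
      b ⟨i, by omega⟩ = some S ∧ b ⟨i + 1, by omega⟩ = none ∧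
        b ⟨i + 2, by omega⟩ = none ∧ b ⟨i + 3, h⟩ = some S) :
    Force (Achieves [S, O, S])
        ((Finset.univ.filter fun j : Fin n => b j = none).card) true b ∨
      ¬ Force (Achieves [S, O, S])
        ((Finset.univ.filter fun j : Fin n => b j = none).card) false b := by
  obtain ⟨p, hp⟩ : ∃ p, LosingPairAt b p := hpair
  exact or_iff_not_imp_right.mpr fun hdraw => hp.force_true_of_force_false (not_not.mp hdraw)
end

section
/- Let b : Fin n → Option Letter be a board with at least one empty cell such that no single placement of a letter in an empty cell of b produces a board achieving SOO (in particular, b itself does not achieve SOO). Let i be the rightmost empty cell of b, and let b' be the board obtained from b by placing S at i. Then no single placement of a letter in an empty cell of b' produces a board achieving SOO; that is, placing S in the rightmost empty cell is a safe move in the SOO game. -/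
open Letter

/-- Suppose no single placement of a letter in an empty cell of the board `b`
produces a board achieving SOO, `i` is the rightmost empty cell of `b`, and
`b'` is obtained from `b` by placing S at `i`.  Then no single placement of a
letter in an empty cell of `b'` produces a board achieving SOO: placing S in
the rightmost empty cell is a safe move in the SOO game. -/
theorem soo_rightmost_s_safe {n : ℕ} (b : Fin n → Option Letter)
    (hsafe : ∀ (j : Fin n) (x : Letter), b j = none →
      ¬ Achieves [S, O, O] (Function.update b j (some x)))
    (i : Fin n) (hi : b i = none)
    (hrightmost : ∀ j : Fin n, b j = none → j ≤ i) :
    ∀ (j : Fin n) (x : Letter), Function.update b i (some S) j = none →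
      ¬ Achieves [S, O, O]
        (Function.update (Function.update b i (some S)) j (some x)) := by
  intro j x hj hach
  have hji : j ≠ i := by
    intro h; subst h; simp [Function.update_self] at hj
  have hbj : b j = none := by
    rwa [Function.update_of_ne hji] at hj
  have hjlt : (j : ℕ) < (i : ℕ) :=
    lt_of_le_of_ne (hrightmost j hbj) (fun h => hji (Fin.ext h))
  obtain ⟨k, hk⟩ := hach
  obtain ⟨h0, e0⟩ := hk 0 (by norm_num)
  obtain ⟨h1, e1⟩ := hk 1 (by norm_num)
  obtain ⟨h2, e2⟩ := hk 2 (by norm_num)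
  simp only [List.get] at e0 e1 e2
  -- value at i in the final board is some S
  have hb2i : Function.update (Function.update b i (some S)) j (some x) i = some S := by
    rw [Function.update_of_ne hji.symm, Function.update_self]
  by_cases hik : (i : ℕ) = k
  · -- i is the start of the pattern; j must be left of k, so not in pattern
    have hj0 : (j : ℕ) ≠ k + 0 := by omega
    have hj1 : (j : ℕ) ≠ k + 1 := by omega
    have hj2 : (j : ℕ) ≠ k + 2 := by omega
    refine hsafe i S hi ⟨k, ?_⟩
    intro m hm
    simp only [List.length_cons, List.length_nil] at hm
    interval_cases m
    · refine ⟨h0, ?_⟩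
      show Function.update b i (some S) ⟨k + 0, h0⟩ = some S
      have hc : (⟨k + 0, h0⟩ : Fin n) = i := by simp [Fin.ext_iff]; omega
      rw [hc, Function.update_self]
    · refine ⟨h1, ?_⟩
      show Function.update b i (some S) ⟨k + 1, h1⟩ = some O
      rw [← e1, Function.update_of_ne
        (show (⟨k + 1, h1⟩ : Fin n) ≠ j by simp [Fin.ext_iff]; omega)]
    · refine ⟨h2, ?_⟩
      show Function.update b i (some S) ⟨k + 2, h2⟩ = some O
      rw [← e2, Function.update_of_ne
        (show (⟨k + 2, h2⟩ : Fin n) ≠ j by simp [Fin.ext_iff]; omega)]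
  · -- i is not in the pattern: i ≠ k+1, k+2 since those carry O, i carries S
    have hi1 : (i : ℕ) ≠ k + 1 := by
      intro h
      have : (⟨k + 1, h1⟩ : Fin n) = i := by simp [Fin.ext_iff, h]
      rw [this, hb2i] at e1; simp at e1
    have hi2 : (i : ℕ) ≠ k + 2 := by
      intro h
      have : (⟨k + 2, h2⟩ : Fin n) = i := by simp [Fin.ext_iff, h]
      rw [this, hb2i] at e2; simp at e2
    have hi0 : (i : ℕ) ≠ k + 0 := by omega
    -- so the pattern lives in `update b j x`
    refine hsafe j x hbj ⟨k, ?_⟩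
    intro m hm
    simp only [List.length_cons, List.length_nil] at hm
    interval_cases m
    · refine ⟨h0, ?_⟩
      show Function.update b j (some x) ⟨k + 0, h0⟩ = some S
      rw [← e0]
      by_cases hc : (⟨k + 0, h0⟩ : Fin n) = j
      · rw [hc]; simp [Function.update_self]
      · rw [Function.update_of_ne hc, Function.update_of_ne hc,
          Function.update_of_ne (by simp [Fin.ext_iff]; omega)]
    · refine ⟨h1, ?_⟩
      show Function.update b j (some x) ⟨k + 1, h1⟩ = some O
      rw [← e1]
      by_cases hc : (⟨k + 1, h1⟩ : Fin n) = j
      · rw [hc]; simp [Function.update_self]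
      · rw [Function.update_of_ne hc, Function.update_of_ne hc,
          Function.update_of_ne (by simp [Fin.ext_iff]; omega)]
    · refine ⟨h2, ?_⟩
      show Function.update b j (some x) ⟨k + 2, h2⟩ = some O
      rw [← e2]
      by_cases hc : (⟨k + 2, h2⟩ : Fin n) = j
      · rw [hc]; simp [Function.update_self]
      · rw [Function.update_of_ne hc, Function.update_of_ne hc,
          Function.update_of_ne (by simp [Fin.ext_iff]; omega)]
end

section
/- For any m and any sequence of letters x₁, …, x_m ∈ {S, O}, the string of length 2m obtained by doubling each letter, x₁ x₁ x₂ x₂ ⋯ x_m x_m, does not contain SOSO = [S,O,S,O] as a consecutive substring. -/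
open Letter

/-- The string `w` (of length `N`) contains the string `t` as a consecutive
substring. -/
def ContainsStr {N : ℕ} (w : Fin N → Letter) (t : List Letter) : Prop :=
  ∃ i : ℕ, ∀ j : ℕ, (hj : j < t.length) → ∃ h : i + j < N,
    w ⟨i + j, h⟩ = t.get ⟨j, hj⟩

/-- The string of length `2m` obtained from `x : Fin m → Letter` by doubling
each letter: its value at positions `2k` and `2k + 1` is `x k`. -/
def Doubled {m : ℕ} (x : Fin m → Letter) : Fin (2 * m) → Letter :=
  fun k => x ⟨(k : ℕ) / 2, by have hk := k.isLt; omega⟩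

/-- For any sequence of letters `x₁, …, x_m`, the doubled string
`x₁ x₁ x₂ x₂ ⋯ x_m x_m` does not contain SOSO as a consecutive substring. -/
theorem doubled_not_contains_soso (m : ℕ) (x : Fin m → Letter) :
    ¬ ContainsStr (Doubled x) [S, O, S, O] := by
  rintro ⟨i, h⟩
  obtain ⟨h0, e0⟩ := h 0 (by norm_num)
  obtain ⟨h1, e1⟩ := h 1 (by norm_num)
  obtain ⟨h2, e2⟩ := h 2 (by norm_num)
  simp only [Doubled, List.get] at e0 e1 e2
  rcases Nat.even_or_odd i with ⟨k, hk⟩ | ⟨k, hk⟩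
  · have : (i + 0) / 2 = (i + 1) / 2 := by omega
    rw [show (⟨(i+0)/2, by omega⟩ : Fin m) = ⟨(i+1)/2, by omega⟩ from Fin.ext this] at e0
    rw [e0] at e1
    exact absurd e1 (by simp)
  · have : (i + 1) / 2 = (i + 2) / 2 := by omega
    rw [show (⟨(i+1)/2, by omega⟩ : Fin m) = ⟨(i+2)/2, by omega⟩ from Fin.ext this] at e1
    rw [e1] at e2
    exact absurd e2 (by simp)
end
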